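/- arXiv:2501.01714 — 12 statements merged into one kernel-verified Lean document; each statement's English description precedes it below -/
import Mathlib

section
/- In any transposed Poisson algebra (A, ·, [·,·]) over a field of characteristic zero, the identity x₁[x₂,x₃] − x₂[x₁,x₃] + x₃[x₁,x₂] = 0 holds for all x₁,x₂,x₃ ∈ A. -/
theorem tp_cyclic_identity {K A : Type*} [Field K] [CharZero K] [CommRing A] [Algebra K A]
    (f : A → A → A)
    (hadd1 : ∀ a b c : A, f (a + b) c = f a c + f b c)
    (hadd2 : ∀ a b c : A, f a (b + c) = f a b + f a c)
    (hsmul1 : ∀ (k : K) (a b : A), f (k • a) b = k • f a b)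
    (hsmul2 : ∀ (k : K) (a b : A), f a (k • b) = k • f a b)
    (hskew : ∀ a b : A, f a b = - f b a)
    (hjac : ∀ a b c : A, f (f a b) c + f (f b c) a + f (f c a) b = 0)
    (hleib : ∀ h a b : A, 2 * (h * f a b) = f (h * a) b + f a (h * b)) :
    ∀ x1 x2 x3 : A, x1 * f x2 x3 - x2 * f x1 x3 + x3 * f x1 x2 = 0 := by
  intro x y z
  set S := x * f y z - y * f x z + z * f x y with hS
  have h2 : 2 * S = 0 := by
    have hx := hleib x y z
    have hy := hleib y x z
    have hz := hleib z x y
    have e1 : f (x * y) z = - f z (x * y) := hskew _ _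
    have e2 : f y (x * z) = - f (z * x) y := by
      rw [hskew]; ring_nf
    have e3 : f x (y * z) = f x (z * y) := by ring_nf
    have : 2 * S = 2 * (x * f y z) - 2 * (y * f x z) + 2 * (z * f x y) := by ring
    rw [this, hx, hy, hz, e1, e2, e3]
    ring_nf
    rw [hskew (x * y) z]
    ring
  have h2' : (2 : K) • S = 0 := by
    rw [two_smul]
    rw [two_mul] at h2
    exact h2
  rcases smul_eq_zero.mp h2' with h | h
  · exact absurd h (by norm_num)
  · exact h
end

section
/- In any transposed Poisson algebra (A, ·, [·,·]) over a field of characteristic zero, the strong condition holds: y₁[h·y₂, x] − y₂[h·y₁, x] + h·x·[y₁,y₂] = 0 for all h, y₁, y₂, x ∈ A. -/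
theorem tp_strong_condition {K A : Type*} [Field K] [CharZero K] [CommRing A] [Algebra K A]
    (f : A → A → A)
    (hadd1 : ∀ a b c : A, f (a + b) c = f a c + f b c)
    (hadd2 : ∀ a b c : A, f a (b + c) = f a b + f a c)
    (hsmul1 : ∀ (k : K) (a b : A), f (k • a) b = k • f a b)
    (hsmul2 : ∀ (k : K) (a b : A), f a (k • b) = k • f a b)
    (hskew : ∀ a b : A, f a b = - f b a)
    (hjac : ∀ a b c : A, f (f a b) c + f (f b c) a + f (f c a) b = 0)
    (hleib : ∀ h a b : A, 2 * (h * f a b) = f (h * a) b + f a (h * b)) :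
    ∀ h y1 y2 x : A,
      y1 * f (h * y2) x - y2 * f (h * y1) x + h * x * f y1 y2 = 0 := by
  -- First, the "circle" identity: a[b,c] + b[c,a] + c[a,b] = 0.
  have I : ∀ a b c : A, a * f b c + b * f c a + c * f a b = 0 := by
    intro a b c
    have e1 := hleib a b c
    have e2 := hleib b c a
    have e3 := hleib c a b
    rw [mul_comm b a] at e2
    rw [mul_comm c a, mul_comm c b] at e3
    have key : (2 : A) * (a * f b c + b * f c a + c * f a b) = 0 := by
      linear_combination e1 + e2 + e3 + hskew (a * b) c + hskew b (a * c) + hskew (b * c) a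
    have hz : (2 : K) • (a * f b c + b * f c a + c * f a b) = 0 := by
      rw [two_smul, ← two_mul]
      exact key
    rcases smul_eq_zero.mp hz with h2 | hz0
    · exact absurd h2 two_ne_zero
    · exact hz0
  intro h y1 y2 x
  have I1 := I y1 (h * y2) x
  have I2 := I y2 (h * y1) x
  have I3 := I x y1 y2
  have T := hleib h y1 y2
  have S1 := hskew y2 (h * y1)
  have SG := hskew y2 x
  linear_combination I1 - I2 - h * I3 + x * T + x * S1 + (h * y1) * SG
end

section
/- In any transposed Poisson 3-Lie algebra (A, ·, [·,·,·]) over a field of characteristic zero, the identity x₁[x₂,x₃,x₄] − x₂[x₁,x₃,x₄] + x₃[x₁,x₂,x₄] − x₄[x₁,x₂,x₃] = 0 holds for all x₁,x₂,x₃,x₄ ∈ A. -/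
theorem tp3_alternating_identity {K A : Type*} [Field K] [CharZero K] [CommRing A] [Algebra K A]
    (f : A → A → A → A)
    (hadd1 : ∀ a b c d : A, f (a + b) c d = f a c d + f b c d)
    (hadd2 : ∀ a b c d : A, f a (b + c) d = f a b d + f a c d)
    (hadd3 : ∀ a b c d : A, f a b (c + d) = f a b c + f a b d)
    (hsmul1 : ∀ (k : K) (a b c : A), f (k • a) b c = k • f a b c)
    (hsmul2 : ∀ (k : K) (a b c : A), f a (k • b) c = k • f a b c)
    (hsmul3 : ∀ (k : K) (a b c : A), f a b (k • c) = k • f a b c)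
    (hskew12 : ∀ a b c : A, f a b c = - f b a c)
    (hskew23 : ∀ a b c : A, f a b c = - f a c b)
    (hjac : ∀ x1 x2 x3 y2 y3 : A, f (f x1 x2 x3) y2 y3 =
      f (f x1 y2 y3) x2 x3 + f x1 (f x2 y2 y3) x3 + f x1 x2 (f x3 y2 y3))
    (hleib : ∀ h a1 a2 a3 : A, 3 * (h * f a1 a2 a3) =
      f (h * a1) a2 a3 + f a1 (h * a2) a3 + f a1 a2 (h * a3)) :
    ∀ x1 x2 x3 x4 : A,
      x1 * f x2 x3 x4 - x2 * f x1 x3 x4 + x3 * f x1 x2 x4 - x4 * f x1 x2 x3 = 0 := by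
  intro x1 x2 x3 x4
  have h1 := hleib x1 x2 x3 x4
  have h2 := hleib x2 x1 x3 x4
  have h3 := hleib x3 x1 x2 x4
  have h4 := hleib x4 x1 x2 x3
  rw [mul_comm x2 x1] at h2
  rw [mul_comm x3 x1, mul_comm x3 x2] at h3
  rw [mul_comm x4 x1, mul_comm x4 x2, mul_comm x4 x3] at h4
  have sA := hskew12 (x1 * x3) x2 x4
  have sB1 := hskew12 (x1 * x4) x2 x3
  have sB2 := hskew23 x2 (x1 * x4) x3
  have sD := hskew23 x1 (x2 * x4) x3
  have key : (3 : A) * (x1 * f x2 x3 x4 - x2 * f x1 x3 x4 + x3 * f x1 x2 x4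
      - x4 * f x1 x2 x3) = 0 := by
    linear_combination h1 - h2 + h3 - h4 + sA - sB1 + sB2 - sD
  have h13 : (algebraMap K A) (1 / 3) * 3 = 1 := by
    rw [show (3 : A) = algebraMap K A 3 from (map_ofNat _ 3).symm, ← map_mul]
    norm_num
  calc x1 * f x2 x3 x4 - x2 * f x1 x3 x4 + x3 * f x1 x2 x4 - x4 * f x1 x2 x3
      = (algebraMap K A) (1 / 3) *
        ((3 : A) * (x1 * f x2 x3 x4 - x2 * f x1 x3 x4 + x3 * f x1 x2 x4
          - x4 * f x1 x2 x3)) := by rw [← mul_assoc, h13, one_mul]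
    _ = 0 := by rw [key, mul_zero]
end

section
/- In any transposed Poisson 3-Lie algebra (A, ·, [·,·,·]) over a field of characteristic zero, the identity [[x₁,x₂,x₃]·h, y₂, y₃] = [[x₁,y₂,y₃]·h, x₂, x₃] − [[x₂,y₂,y₃]·h, x₁, x₃] + [[x₃,y₂,y₃]·h, x₁, x₂] holds for all h, x₁, x₂, x₃, y₂, y₃ ∈ A. -/
set_option maxRecDepth 100000 in
set_option maxHeartbeats 2000000 in
theorem tp3_bracket_h_identity {K A : Type*} [Field K] [CharZero K] [CommRing A] [Algebra K A]
    (f : A → A → A → A)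
    (hadd1 : ∀ a b c d : A, f (a + b) c d = f a c d + f b c d)
    (hadd2 : ∀ a b c d : A, f a (b + c) d = f a b d + f a c d)
    (hadd3 : ∀ a b c d : A, f a b (c + d) = f a b c + f a b d)
    (hsmul1 : ∀ (k : K) (a b c : A), f (k • a) b c = k • f a b c)
    (hsmul2 : ∀ (k : K) (a b c : A), f a (k • b) c = k • f a b c)
    (hsmul3 : ∀ (k : K) (a b c : A), f a b (k • c) = k • f a b c)
    (hskew12 : ∀ a b c : A, f a b c = - f b a c)
    (hskew23 : ∀ a b c : A, f a b c = - f a c b)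
    (hjac : ∀ x1 x2 x3 y2 y3 : A, f (f x1 x2 x3) y2 y3 =
      f (f x1 y2 y3) x2 x3 + f x1 (f x2 y2 y3) x3 + f x1 x2 (f x3 y2 y3))
    (hleib : ∀ h a1 a2 a3 : A, 3 * (h * f a1 a2 a3) =
      f (h * a1) a2 a3 + f a1 (h * a2) a3 + f a1 a2 (h * a3)) :
    ∀ h x1 x2 x3 y2 y3 : A,
      f (f x1 x2 x3 * h) y2 y3 =
        f (f x1 y2 y3 * h) x2 x3 - f (f x2 y2 y3 * h) x1 x3 + f (f x3 y2 y3 * h) x1 x2 := by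
  have hneg1 : ∀ a b c : A, f (-a) b c = - f a b c := by
    intro a b c
    have := hsmul1 (-1 : K) a b c
    rwa [neg_one_smul, neg_one_smul] at this
  have hneg2 : ∀ a b c : A, f a (-b) c = - f a b c := by
    intro a b c
    have := hsmul2 (-1 : K) a b c
    rwa [neg_one_smul, neg_one_smul] at this
  have hneg3 : ∀ a b c : A, f a b (-c) = - f a b c := by
    intro a b c
    have := hsmul3 (-1 : K) a b c
    rwa [neg_one_smul, neg_one_smul] at this
  have q12_1 : ∀ a b c d e : A, f (f a b c) d e = - f (f b a c) d e := by
    intro a b c d e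
    rw [hskew12 b a c, hneg1, neg_neg]
  have q23_1 : ∀ a b c d e : A, f (f a b c) d e = - f (f a c b) d e := by
    intro a b c d e
    rw [hskew23 a c b, hneg1, neg_neg]
  have q12_2 : ∀ a b c d e : A, f d (f a b c) e = - f d (f b a c) e := by
    intro a b c d e
    rw [hskew12 b a c, hneg2, neg_neg]
  have q23_2 : ∀ a b c d e : A, f d (f a b c) e = - f d (f a c b) e := by
    intro a b c d e
    rw [hskew23 a c b, hneg2, neg_neg]
  have q12_3 : ∀ a b c d e : A, f d e (f a b c) = - f d e (f b a c) := by
    intro a b c d e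
    rw [hskew12 b a c, hneg3, neg_neg]
  have q23_3 : ∀ a b c d e : A, f d e (f a b c) = - f d e (f a c b) := by
    intro a b c d e
    rw [hskew23 a c b, hneg3, neg_neg]
  have r12_1 : ∀ a b c m d e : A, f (f a b c * m) d e = - f (f b a c * m) d e := by
    intro a b c m d e
    rw [hskew12 b a c, neg_mul, hneg1, neg_neg]
  have r23_1 : ∀ a b c m d e : A, f (f a b c * m) d e = - f (f a c b * m) d e := by
    intro a b c m d e
    rw [hskew23 a c b, neg_mul, hneg1, neg_neg]
  have r12_2 : ∀ a b c m d e : A, f d (f a b c * m) e = - f d (f b a c * m) e := by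
    intro a b c m d e
    rw [hskew12 b a c, neg_mul, hneg2, neg_neg]
  have r23_2 : ∀ a b c m d e : A, f d (f a b c * m) e = - f d (f a c b * m) e := by
    intro a b c m d e
    rw [hskew23 a c b, neg_mul, hneg2, neg_neg]
  have r12_3 : ∀ a b c m d e : A, f d e (f a b c * m) = - f d e (f b a c * m) := by
    intro a b c m d e
    rw [hskew12 b a c, neg_mul, hneg3, neg_neg]
  have r23_3 : ∀ a b c m d e : A, f d e (f a b c * m) = - f d e (f a c b * m) := by
    intro a b c m d e
    rw [hskew23 a c b, neg_mul, hneg3, neg_neg]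
  have ctxL : ∀ a b c d u v : A, 3 * f (a * f b c d) u v =
      f (f (a * b) c d) u v + f (f b (a * c) d) u v + f (f b c (a * d)) u v := by
    intro a b c d u v
    have e : f (3 * (a * f b c d)) u v =
        f (f (a * b) c d + f b (a * c) d + f b c (a * d)) u v := by rw [hleib a b c d]
    rw [show (3 : A) * (a * f b c d) = a * f b c d + a * f b c d + a * f b c d by ring] at e
    simp only [hadd1] at e
    linear_combination e
  intro h x1 x2 x3 y2 y3
  have key : (12 : A) * f (f x1 x2 x3 * h) y2 y3 =
      (12 : A) * (f (f x1 y2 y3 * h) x2 x3 - f (f x2 y2 y3 * h) x1 x3 + f (f x3 y2 y3 * h) x1 x2) := by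
    linear_combination (norm := (simp only [mul_comm, mul_left_comm, mul_assoc]; ring1))
      (9 : A) * (hleib h (f x3 y2 y3) x1 x2) +
      (-9 : A) * (hleib h (f x2 y2 y3) x1 x3) +
      (18 : A) * (hjac (h * x1) x3 y2 x2 y3) +
      (18 : A) * (hjac (h * x1) x2 y3 x3 y2) +
      (-18 : A) * (hjac (h * x2) x3 y2 x1 y3) +
      (-18 : A) * (hjac (h * x2) x1 y3 x3 y2) +
      (18 : A) * (hjac (h * x3) x2 y2 x1 y3) +
      (18 : A) * (hjac (h * x3) x1 y3 x2 y2) +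
      (-3 : A) * (hleib h (f x1 x2 x3) y2 y3) +
      (-12 : A) * (hjac (h * y2) x2 x3 x1 y3) +
      (-12 : A) * (hjac (h * y2) x1 y3 x2 x3) +
      (12 : A) * (hjac (h * y3) x2 x3 x1 y2) +
      (12 : A) * (hjac (h * y3) x1 y2 x2 x3) +
      (21 : A) * (hleib x3 (f x1 x2 y2) h y3) +
      (6 : A) * (ctxL x3 x1 x2 y2 h y3) +
      (10 : A) * (ctxL x3 x1 y2 y3 h x2) +
      (-10 : A) * (ctxL x3 x2 y2 y3 h x1) +
      (-21 : A) * (hleib x3 (f x1 x2 y3) h y2) +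
      (-81 : A) * ((x3) * (hjac h x1 y3 x2 y2)) +
      (-27 : A) * (hleib x3 (f x2 y2 y3) h x1) +
      (27 : A) * (hleib x3 (f x1 y2 y3) h x2) +
      (-72 : A) * ((x3) * (hjac h x2 y2 x1 y3)) +
      (-6 : A) * (hjac x1 x2 y3 (x3 * y2) h) +
      (-6 : A) * (hjac (x3 * y2) h x1 x2 y3) +
      (6 : A) * (hjac (x3 * y2) h x2 x1 y3) +
      (6 : A) * (hjac (x3 * y2) x1 x2 h y3) +
      (-6 : A) * (ctxL x3 x1 x2 y3 h y2) +
      (-4 : A) * (ctxL y3 x1 x2 y2 h x3) +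
      (4 : A) * (ctxL y2 x1 x2 y3 h x3) +
      (-10 : A) * (ctxL x2 x1 y2 y3 h x3) +
      (10 : A) * (ctxL x1 x2 y2 y3 h x3) +
      (6 : A) * (hjac x1 x2 y2 (x3 * y3) h) +
      (6 : A) * (hjac (x3 * y3) h x1 x2 y2) +
      (-6 : A) * (hjac (x3 * y3) h x2 x1 y2) +
      (-6 : A) * (hjac (x3 * y3) x1 x2 h y2) +
      (-21 : A) * (hleib x2 (f x1 x3 y2) h y3) +
      (-6 : A) * (ctxL x2 x1 x3 y2 h y3) +
      (10 : A) * (ctxL x2 x3 y2 y3 h x1) +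
      (21 : A) * (hleib x2 (f x1 x3 y3) h y2) +
      (-27 : A) * (hleib x2 (f x1 y2 y3) h x3) +
      (81 : A) * ((x2) * (hjac h x1 y3 x3 y2)) +
      (27 : A) * (hleib x2 (f x3 y2 y3) h x1) +
      (72 : A) * ((x2) * (hjac h x3 y2 x1 y3)) +
      (6 : A) * (ctxL x2 x1 x3 y3 h y2) +
      (-6 : A) * (hjac x1 x3 y2 (x2 * y3) h) +
      (-6 : A) * (hjac (x2 * y3) h x1 x3 y2) +
      (6 : A) * (hjac (x2 * y3) h x3 x1 y2) +
      (6 : A) * (hjac (x2 * y3) x1 x3 h y2) +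
      (6 : A) * (hjac x1 x3 y3 (x2 * y2) h) +
      (6 : A) * (hjac (x2 * y2) h x1 x3 y3) +
      (-6 : A) * (hjac (x2 * y2) h x3 x1 y3) +
      (-6 : A) * (hjac (x2 * y2) x1 x3 h y3) +
      (4 : A) * (ctxL y3 x1 x3 y2 h x2) +
      (-4 : A) * (ctxL y2 x1 x3 y3 h x2) +
      (-10 : A) * (ctxL x1 x3 y2 y3 h x2) +
      (21 : A) * (hleib x1 (f x2 x3 y2) h y3) +
      (6 : A) * (ctxL x1 x2 x3 y2 h y3) +
      (-6 : A) * (ctxL x1 x2 x3 y3 h y2) +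
      (6 : A) * (hjac x2 x3 y2 (x1 * y3) h) +
      (6 : A) * (hjac (x1 * y3) h x2 x3 y2) +
      (-6 : A) * (hjac (x1 * y3) h x3 x2 y2) +
      (-6 : A) * (hjac (x1 * y3) x2 x3 h y2) +
      (-6 : A) * (hjac x2 x3 y3 (x1 * y2) h) +
      (-6 : A) * (hjac (x1 * y2) h x2 x3 y3) +
      (6 : A) * (hjac (x1 * y2) h x3 x2 y3) +
      (6 : A) * (hjac (x1 * y2) x2 x3 h y3) +
      (-21 : A) * (hleib x1 (f x2 x3 y3) h y2) +
      (27 : A) * (hleib x1 (f x2 y2 y3) h x3) +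
      (-27 : A) * (hleib x1 (f x3 y2 y3) h x2) +
      (-72 : A) * ((x1) * (hjac h x3 y2 x2 y3)) +
      (-81 : A) * ((x1) * (hjac h x2 y3 x3 y2)) +
      (-4 : A) * (ctxL y3 x2 x3 y2 h x1) +
      (4 : A) * (ctxL y2 x2 x3 y3 h x1) +
      (9 : A) * ((h) * (hjac x1 x2 x3 y2 y3)) +
      (3 : A) * (hleib (f x1 x2 y2) h x3 y3) +
      (-3 : A) * (hleib h (f x1 x2 y2) x3 y3) +
      (9 : A) * ((h) * (hjac x1 x2 y2 x3 y3)) +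
      (-3 : A) * (hleib (f x1 x2 y3) h x3 y2) +
      (3 : A) * (hleib h (f x1 x2 y3) x3 y2) +
      (27 : A) * ((h) * (hjac x1 x2 y3 x3 y2)) +
      (-3 : A) * (hleib (f x1 x3 y2) h x2 y3) +
      (3 : A) * (hleib h (f x1 x3 y2) x2 y3) +
      (3 : A) * (hleib (f x1 x3 y3) h x2 y2) +
      (-3 : A) * (hleib h (f x1 x3 y3) x2 y2) +
      (18 : A) * ((x3) * (hjac x1 x2 y2 h y3)) +
      (9 : A) * (hleib (f h y2 y3) x1 x2 x3) +
      (-9 : A) * (hleib x3 (f h y2 y3) x1 x2) +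
      (-9 : A) * (hleib x1 (f h y2 y3) x2 x3) +
      (9 : A) * (hleib x2 (f h y2 y3) x1 x3) +
      (3 : A) * (hleib (f h x2 y3) x1 x3 y2) +
      (-3 : A) * (hleib y2 (f h x2 y3) x1 x3) +
      (-3 : A) * (hleib x1 (f h x2 y3) x3 y2) +
      (3 : A) * (hleib x3 (f h x2 y3) x1 y2) +
      (-18 : A) * ((x2) * (hjac x1 x3 y2 h y3)) +
      (18 : A) * ((x1) * (hjac x2 x3 y2 h y3)) +
      (-3 : A) * (hleib (f h x3 y3) x1 x2 y2) +
      (3 : A) * (hleib y2 (f h x3 y3) x1 x2) +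
      (3 : A) * (hleib x1 (f h x3 y3) x2 y2) +
      (-3 : A) * (hleib x2 (f h x3 y3) x1 y2) +
      (15 : A) * (hleib y2 (f x2 x3 y3) h x1) +
      (15 : A) * (hleib y2 (f x1 x2 y3) h x3) +
      (-15 : A) * (hleib y2 (f x1 x3 y3) h x2) +
      (9 : A) * ((y3) * (hjac h x1 x3 x2 y2)) +
      (3 : A) * (hleib (f h x1 x3) x2 y2 y3) +
      (-3 : A) * (hleib x2 (f h x1 x3) y2 y3) +
      (-3 : A) * (hleib y3 (f h x1 x3) x2 y2) +
      (3 : A) * (hleib y2 (f h x1 x3) x2 y3) +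
      (-9 : A) * ((y2) * (hjac h x1 x3 x2 y3)) +
      (18 : A) * ((h) * (hjac x1 x3 y2 x2 y3)) +
      (9 : A) * ((x2) * (hjac h x1 x3 y2 y3)) +
      (-3 : A) * (hleib (f h x2 y2) x1 x3 y3) +
      (3 : A) * (hleib y3 (f h x2 y2) x1 x3) +
      (-3 : A) * (hleib x3 (f h x2 y2) x1 y3) +
      (3 : A) * (hleib x1 (f h x2 y2) x3 y3) +
      (-3 : A) * (hleib (f x2 y2 y3) h x1 x3) +
      (-9 : A) * ((x1) * (hjac h x2 y2 x3 y3)) +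
      (-15 : A) * (hleib y3 (f x1 x2 y2) h x3) +
      (-15 : A) * (hleib y3 (f x2 x3 y2) h x1) +
      (-9 : A) * ((y3) * (hjac h x1 x2 x3 y2)) +
      (-3 : A) * (hleib (f h x1 x2) x3 y2 y3) +
      (3 : A) * (hleib x3 (f h x1 x2) y2 y3) +
      (-3 : A) * (hleib y2 (f h x1 x2) x3 y3) +
      (3 : A) * (hleib y3 (f h x1 x2) x3 y2) +
      (9 : A) * ((y2) * (hjac h x1 x2 x3 y3)) +
      (-9 : A) * ((x3) * (hjac h x1 x2 y2 y3)) +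
      (3 : A) * (hleib (f x1 y2 y3) h x2 x3) +
      (3 : A) * (hleib (f h x3 y2) x1 x2 y3) +
      (-3 : A) * (hleib y3 (f h x3 y2) x1 x2) +
      (3 : A) * (hleib x2 (f h x3 y2) x1 y3) +
      (-3 : A) * (hleib x1 (f h x3 y2) x2 y3) +
      (3 : A) * (hleib (f x3 y2 y3) h x1 x2) +
      (15 : A) * (hleib y3 (f x1 x3 y2) h x2) +
      (-18 : A) * ((h) * (hjac x2 x3 y2 x1 y3)) +
      (-36 : A) * ((y3) * (hjac h x2 x3 x1 y2)) +
      (3 : A) * (hleib (f h x1 y2) x2 x3 y3) +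
      (-3 : A) * (hleib y3 (f h x1 y2) x2 x3) +
      (3 : A) * (hleib x3 (f h x1 y2) x2 y3) +
      (-3 : A) * (hleib x2 (f h x1 y2) x3 y3) +
      (-9 : A) * ((x3) * (hjac h x1 y2 x2 y3)) +
      (9 : A) * ((x2) * (hjac h x1 y2 x3 y3)) +
      (-3 : A) * (hleib (f h x2 x3) x1 y2 y3) +
      (3 : A) * (hleib x1 (f h x2 x3) y2 y3) +
      (3 : A) * (hleib y3 (f h x2 x3) x1 y2) +
      (-3 : A) * (hleib y2 (f h x2 x3) x1 y3) +
      (9 : A) * (hleib h (f x1 y2 y3) x2 x3) +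
      (-9 : A) * ((x1) * (hjac h x2 x3 y2 y3)) +
      (27 : A) * ((y2) * (hjac h x1 y3 x2 x3)) +
      (-3 : A) * (hleib (f x2 x3 y3) h x1 y2) +
      (3 : A) * (hleib h (f x2 x3 y3) x1 y2) +
      (3 : A) * (hleib (f x2 x3 y2) h x1 y3) +
      (-3 : A) * (hleib h (f x2 x3 y2) x1 y3) +
      (-3 : A) * (hleib (f h x1 y3) x2 x3 y2) +
      (3 : A) * (hleib y2 (f h x1 y3) x2 x3) +
      (3 : A) * (hleib x2 (f h x1 y3) x3 y2) +
      (-3 : A) * (hleib x3 (f h x1 y3) x2 y2) +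
      (36 : A) * ((y2) * (hjac h x2 x3 x1 y3)) +
      (-27 : A) * ((y3) * (hjac h x1 y2 x2 x3)) +
      (-9 : A) * (hleib (f x1 x2 x3) h y2 y3) +
      (9 : A) * (hleib y3 (f x1 x2 x3) h y2) +
      (-9 : A) * (hleib y2 (f x1 x2 x3) h y3) +
      (9 : A) * (hskew23 (f x3 y2 y3) x1 (h * x2)) +
      (-9 : A) * (hskew23 (f x2 y2 y3) x1 (h * x3)) +
      (18 : A) * (q12_2 x3 x2 y3 (h * x1) y2) +
      (-18 : A) * (hskew12 (h * x1) (f x2 x3 y3) y2) +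
      (18 : A) * (q12_3 y2 x2 y3 (h * x1) x3) +
      (-18 : A) * (hskew23 (h * x1) x3 (f x2 y2 y3)) +
      (18 : A) * (hskew12 (h * x1) (f x2 y2 y3) x3) +
      (18 : A) * (hskew12 (h * x1) (f x2 x3 y2) y3) +
      (18 : A) * (q12_3 y3 x3 y2 (h * x1) x2) +
      (-18 : A) * (q23_3 x3 y3 y2 (h * x1) x2) +
      (18 : A) * (hskew23 (h * x1) x2 (f x3 y2 y3)) +
      (-18 : A) * (hskew12 (h * x1) (f x3 y2 y3) x2) +
      (-18 : A) * (q12_2 x3 x1 y3 (h * x2) y2) +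
      (18 : A) * (hskew12 (h * x2) (f x1 x3 y3) y2) +
      (-18 : A) * (q12_3 y2 x1 y3 (h * x2) x3) +
      (18 : A) * (hskew23 (h * x2) x3 (f x1 y2 y3)) +
      (-18 : A) * (hskew12 (h * x2) (f x1 y2 y3) x3) +
      (-18 : A) * (hskew12 (h * x2) (f x1 x3 y2) y3) +
      (-18 : A) * (q12_3 y3 x3 y2 (h * x2) x1) +
      (18 : A) * (q23_3 x3 y3 y2 (h * x2) x1) +
      (-18 : A) * (hskew23 (h * x2) x1 (f x3 y2 y3)) +
      (18 : A) * (hskew12 (h * x2) (f x3 y2 y3) x1) +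
      (18 : A) * (q12_2 x2 x1 y3 (h * x3) y2) +
      (-18 : A) * (hskew12 (h * x3) (f x1 x2 y3) y2) +
      (18 : A) * (q12_3 y2 x1 y3 (h * x3) x2) +
      (-18 : A) * (hskew23 (h * x3) x2 (f x1 y2 y3)) +
      (18 : A) * (hskew12 (h * x3) (f x1 y2 y3) x2) +
      (18 : A) * (hskew12 (h * x3) (f x1 x2 y2) y3) +
      (18 : A) * (q12_3 y3 x2 y2 (h * x3) x1) +
      (-18 : A) * (q23_3 x2 y3 y2 (h * x3) x1) +
      (18 : A) * (hskew23 (h * x3) x1 (f x2 y2 y3)) +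
      (-18 : A) * (hskew12 (h * x3) (f x2 y2 y3) x1) +
      (-3 : A) * (hskew23 (f x1 x2 x3) y2 (h * y3)) +
      (-12 : A) * (q12_2 x2 x1 y3 (h * y2) x3) +
      (12 : A) * (hskew12 (h * y2) (f x1 x2 y3) x3) +
      (-12 : A) * (q12_3 x3 x1 y3 (h * y2) x2) +
      (12 : A) * (hskew23 (h * y2) x2 (f x1 x3 y3)) +
      (-12 : A) * (hskew12 (h * y2) (f x1 x3 y3) x2) +
      (-12 : A) * (hskew12 (h * y2) (f x1 x2 x3) y3) +
      (-12 : A) * (q12_3 y3 x2 x3 (h * y2) x1) +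
      (12 : A) * (q23_3 x2 y3 x3 (h * y2) x1) +
      (-12 : A) * (hskew23 (h * y2) x1 (f x2 x3 y3)) +
      (12 : A) * (hskew12 (h * y2) (f x2 x3 y3) x1) +
      (12 : A) * (q12_2 x2 x1 y2 (h * y3) x3) +
      (-12 : A) * (hskew12 (h * y3) (f x1 x2 y2) x3) +
      (12 : A) * (q12_3 x3 x1 y2 (h * y3) x2) +
      (-12 : A) * (hskew23 (h * y3) x2 (f x1 x3 y2)) +
      (12 : A) * (hskew12 (h * y3) (f x1 x3 y2) x2) +
      (12 : A) * (hskew12 (h * y3) (f x1 x2 x3) y2) +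
      (12 : A) * (q12_3 y2 x2 x3 (h * y3) x1) +
      (-12 : A) * (q23_3 x2 y2 x3 (h * y3) x1) +
      (12 : A) * (hskew23 (h * y3) x1 (f x2 x3 y2)) +
      (-12 : A) * (hskew12 (h * y3) (f x2 x3 y2) x1) +
      (6 : A) * (hskew23 (f x1 x2 y2) h (x3 * y3)) +
      (6 : A) * (q23_1 x1 x2 (x3 * y2) h y3) +
      (-6 : A) * (q12_1 x1 (x3 * y2) x2 h y3) +
      (6 : A) * (q12_1 x1 (x3 * y2) y3 h x2) +
      (10 : A) * (q23_1 x1 y2 (x3 * y3) h x2) +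
      (-10 : A) * (q12_1 x1 (x3 * y3) y2 h x2) +
      (-6 : A) * (q12_1 x2 (x3 * y2) y3 h x1) +
      (-10 : A) * (q23_1 x2 y2 (x3 * y3) h x1) +
      (10 : A) * (q12_1 x2 (x3 * y3) y2 h x1) +
      (-6 : A) * (hskew23 (f x1 x2 y3) h (x3 * y2)) +
      (-81 : A) * ((x3) * (hskew12 h (f x1 x2 y2) y3)) +
      (-81 : A) * ((x3) * (q12_3 y3 x2 y2 h x1)) +
      (81 : A) * ((x3) * (q23_3 x2 y3 y2 h x1)) +
      (-81 : A) * ((x3) * (hskew23 h x1 (f x2 y2 y3))) +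
      (81 : A) * ((x3) * (hskew12 h (f x2 y2 y3) x1)) +
      (-72 : A) * ((x3) * (q12_2 x2 x1 y3 h y2)) +
      (72 : A) * ((x3) * (hskew12 h (f x1 x2 y3) y2)) +
      (-72 : A) * ((x3) * (q12_3 y2 x1 y3 h x2)) +
      (72 : A) * ((x3) * (hskew23 h x2 (f x1 y2 y3))) +
      (-72 : A) * ((x3) * (hskew12 h (f x1 y2 y3) x2)) +
      (-6 : A) * (q12_1 x1 (x3 * y2) h x2 y3) +
      (6 : A) * (q23_1 (x3 * y2) x1 h x2 y3) +
      (-6 : A) * (q12_2 x2 (x3 * y2) h x1 y3) +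
      (6 : A) * (q23_2 (x3 * y2) x2 h x1 y3) +
      (-6 : A) * (hskew12 x1 (f (x3 * y2) h x2) y3) +
      (-6 : A) * (q12_3 y3 (x3 * y2) h x1 x2) +
      (6 : A) * (q23_3 (x3 * y2) y3 h x1 x2) +
      (-6 : A) * (hskew23 x1 x2 (f (x3 * y2) h y3)) +
      (6 : A) * (hskew12 x1 (f (x3 * y2) h y3) x2) +
      (-6 : A) * (hskew12 (x3 * y2) (f h x2 y3) x1) +
      (-6 : A) * (hskew23 (x3 * y2) h (f x1 x2 y3)) +
      (6 : A) * (hskew12 (x3 * y2) (f x1 x2 y3) h) +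
      (6 : A) * (hskew12 (x3 * y2) (f h x1 y3) x2) +
      (6 : A) * (q12_3 x2 x1 y3 (x3 * y2) h) +
      (-6 : A) * (hskew23 (x3 * y2) h (f x1 x2 y3)) +
      (6 : A) * (hskew12 (x3 * y2) (f x1 x2 y3) h) +
      (6 : A) * (q12_2 x1 h y3 (x3 * y2) x2) +
      (-6 : A) * (hskew12 (x3 * y2) (f h x1 y3) x2) +
      (6 : A) * (q12_3 x2 h y3 (x3 * y2) x1) +
      (-6 : A) * (hskew23 (x3 * y2) x1 (f h x2 y3)) +
      (6 : A) * (hskew12 (x3 * y2) (f h x2 y3) x1) +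
      (-6 : A) * (q23_1 x1 x2 (x3 * y3) h y2) +
      (6 : A) * (q12_1 x1 (x3 * y3) x2 h y2) +
      (-4 : A) * (q12_1 x1 (x2 * y3) y2 h x3) +
      (-6 : A) * (q12_1 x1 (x2 * y2) y3 h x3) +
      (-10 : A) * (q23_1 x1 y2 (x2 * y3) h x3) +
      (10 : A) * (q12_1 x1 (x2 * y3) y2 h x3) +
      (10 : A) * (q12_1 x2 (x1 * y2) y3 h x3) +
      (10 : A) * (q23_1 x2 y2 (x1 * y3) h x3) +
      (-10 : A) * (q12_1 x2 (x1 * y3) y2 h x3) +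
      (6 : A) * (q12_1 x1 (x3 * y3) h x2 y2) +
      (-6 : A) * (q23_1 (x3 * y3) x1 h x2 y2) +
      (6 : A) * (q12_2 x2 (x3 * y3) h x1 y2) +
      (-6 : A) * (q23_2 (x3 * y3) x2 h x1 y2) +
      (6 : A) * (hskew12 x1 (f (x3 * y3) h x2) y2) +
      (6 : A) * (q12_3 y2 (x3 * y3) h x1 x2) +
      (-6 : A) * (q23_3 (x3 * y3) y2 h x1 x2) +
      (6 : A) * (hskew23 x1 x2 (f (x3 * y3) h y2)) +
      (-6 : A) * (hskew12 x1 (f (x3 * y3) h y2) x2) +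
      (6 : A) * (hskew12 (x3 * y3) (f h x2 y2) x1) +
      (6 : A) * (hskew23 (x3 * y3) h (f x1 x2 y2)) +
      (-6 : A) * (hskew12 (x3 * y3) (f x1 x2 y2) h) +
      (-6 : A) * (hskew12 (x3 * y3) (f h x1 y2) x2) +
      (-6 : A) * (q12_3 x2 x1 y2 (x3 * y3) h) +
      (6 : A) * (hskew23 (x3 * y3) h (f x1 x2 y2)) +
      (-6 : A) * (hskew12 (x3 * y3) (f x1 x2 y2) h) +
      (-6 : A) * (q12_2 x1 h y2 (x3 * y3) x2) +
      (6 : A) * (hskew12 (x3 * y3) (f h x1 y2) x2) +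
      (-6 : A) * (q12_3 x2 h y2 (x3 * y3) x1) +
      (6 : A) * (hskew23 (x3 * y3) x1 (f h x2 y2)) +
      (-6 : A) * (hskew12 (x3 * y3) (f h x2 y2) x1) +
      (-6 : A) * (hskew23 (f x1 x3 y2) h (x2 * y3)) +
      (-6 : A) * (q23_1 x1 x3 (x2 * y2) h y3) +
      (6 : A) * (q12_1 x1 (x2 * y2) x3 h y3) +
      (10 : A) * (q12_1 x3 (x2 * y2) y3 h x1) +
      (10 : A) * (q23_1 x3 y2 (x2 * y3) h x1) +
      (-10 : A) * (q12_1 x3 (x2 * y3) y2 h x1) +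
      (6 : A) * (hskew23 (f x1 x3 y3) h (x2 * y2)) +
      (81 : A) * ((x2) * (hskew12 h (f x1 x3 y2) y3)) +
      (81 : A) * ((x2) * (q12_3 y3 x3 y2 h x1)) +
      (-81 : A) * ((x2) * (q23_3 x3 y3 y2 h x1)) +
      (81 : A) * ((x2) * (hskew23 h x1 (f x3 y2 y3))) +
      (-81 : A) * ((x2) * (hskew12 h (f x3 y2 y3) x1)) +
      (72 : A) * ((x2) * (q12_2 x3 x1 y3 h y2)) +
      (-72 : A) * ((x2) * (hskew12 h (f x1 x3 y3) y2)) +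
      (72 : A) * ((x2) * (q12_3 y2 x1 y3 h x3)) +
      (-72 : A) * ((x2) * (hskew23 h x3 (f x1 y2 y3))) +
      (72 : A) * ((x2) * (hskew12 h (f x1 y2 y3) x3)) +
      (6 : A) * (q23_1 x1 x3 (x2 * y3) h y2) +
      (-6 : A) * (q12_1 x1 (x2 * y3) x3 h y2) +
      (-6 : A) * (q12_1 x1 (x2 * y3) h x3 y2) +
      (6 : A) * (q23_1 (x2 * y3) x1 h x3 y2) +
      (-6 : A) * (q12_2 x3 (x2 * y3) h x1 y2) +
      (6 : A) * (q23_2 (x2 * y3) x3 h x1 y2) +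
      (-6 : A) * (hskew12 x1 (f (x2 * y3) h x3) y2) +
      (-6 : A) * (q12_3 y2 (x2 * y3) h x1 x3) +
      (6 : A) * (q23_3 (x2 * y3) y2 h x1 x3) +
      (-6 : A) * (hskew23 x1 x3 (f (x2 * y3) h y2)) +
      (6 : A) * (hskew12 x1 (f (x2 * y3) h y2) x3) +
      (-6 : A) * (hskew12 (x2 * y3) (f h x3 y2) x1) +
      (-6 : A) * (hskew23 (x2 * y3) h (f x1 x3 y2)) +
      (6 : A) * (hskew12 (x2 * y3) (f x1 x3 y2) h) +
      (6 : A) * (hskew12 (x2 * y3) (f h x1 y2) x3) +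
      (6 : A) * (q12_3 x3 x1 y2 (x2 * y3) h) +
      (-6 : A) * (hskew23 (x2 * y3) h (f x1 x3 y2)) +
      (6 : A) * (hskew12 (x2 * y3) (f x1 x3 y2) h) +
      (6 : A) * (q12_2 x1 h y2 (x2 * y3) x3) +
      (-6 : A) * (hskew12 (x2 * y3) (f h x1 y2) x3) +
      (6 : A) * (q12_3 x3 h y2 (x2 * y3) x1) +
      (-6 : A) * (hskew23 (x2 * y3) x1 (f h x3 y2)) +
      (6 : A) * (hskew12 (x2 * y3) (f h x3 y2) x1) +
      (6 : A) * (q12_1 x1 (x2 * y2) h x3 y3) +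
      (-6 : A) * (q23_1 (x2 * y2) x1 h x3 y3) +
      (6 : A) * (q12_2 x3 (x2 * y2) h x1 y3) +
      (-6 : A) * (q23_2 (x2 * y2) x3 h x1 y3) +
      (6 : A) * (hskew12 x1 (f (x2 * y2) h x3) y3) +
      (6 : A) * (q12_3 y3 (x2 * y2) h x1 x3) +
      (-6 : A) * (q23_3 (x2 * y2) y3 h x1 x3) +
      (6 : A) * (hskew23 x1 x3 (f (x2 * y2) h y3)) +
      (-6 : A) * (hskew12 x1 (f (x2 * y2) h y3) x3) +
      (6 : A) * (hskew12 (x2 * y2) (f h x3 y3) x1) +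
      (6 : A) * (hskew23 (x2 * y2) h (f x1 x3 y3)) +
      (-6 : A) * (hskew12 (x2 * y2) (f x1 x3 y3) h) +
      (-6 : A) * (hskew12 (x2 * y2) (f h x1 y3) x3) +
      (-6 : A) * (q12_3 x3 x1 y3 (x2 * y2) h) +
      (6 : A) * (hskew23 (x2 * y2) h (f x1 x3 y3)) +
      (-6 : A) * (hskew12 (x2 * y2) (f x1 x3 y3) h) +
      (-6 : A) * (q12_2 x1 h y3 (x2 * y2) x3) +
      (6 : A) * (hskew12 (x2 * y2) (f h x1 y3) x3) +
      (-6 : A) * (q12_3 x3 h y3 (x2 * y2) x1) +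
      (6 : A) * (hskew23 (x2 * y2) x1 (f h x3 y3)) +
      (-6 : A) * (hskew12 (x2 * y2) (f h x3 y3) x1) +
      (4 : A) * (q12_1 x1 (x3 * y3) y2 h x2) +
      (-10 : A) * (q12_1 x3 (x1 * y2) y3 h x2) +
      (-10 : A) * (q23_1 x3 y2 (x1 * y3) h x2) +
      (10 : A) * (q12_1 x3 (x1 * y3) y2 h x2) +
      (6 : A) * (hskew23 (f x2 x3 y2) h (x1 * y3)) +
      (6 : A) * (q12_1 x2 (x1 * x3) y2 h y3) +
      (6 : A) * (q23_1 x2 x3 (x1 * y2) h y3) +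
      (-6 : A) * (q12_1 x2 (x1 * y2) x3 h y3) +
      (-6 : A) * (q12_1 x2 (x1 * x3) y3 h y2) +
      (-6 : A) * (q23_1 x2 x3 (x1 * y3) h y2) +
      (6 : A) * (q12_1 x2 (x1 * y3) x3 h y2) +
      (6 : A) * (q12_1 x2 (x1 * y3) h x3 y2) +
      (-6 : A) * (q23_1 (x1 * y3) x2 h x3 y2) +
      (6 : A) * (q12_2 x3 (x1 * y3) h x2 y2) +
      (-6 : A) * (q23_2 (x1 * y3) x3 h x2 y2) +
      (6 : A) * (hskew12 x2 (f (x1 * y3) h x3) y2) +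
      (6 : A) * (q12_3 y2 (x1 * y3) h x2 x3) +
      (-6 : A) * (q23_3 (x1 * y3) y2 h x2 x3) +
      (6 : A) * (hskew23 x2 x3 (f (x1 * y3) h y2)) +
      (-6 : A) * (hskew12 x2 (f (x1 * y3) h y2) x3) +
      (6 : A) * (hskew12 (x1 * y3) (f h x3 y2) x2) +
      (6 : A) * (hskew23 (x1 * y3) h (f x2 x3 y2)) +
      (-6 : A) * (hskew12 (x1 * y3) (f x2 x3 y2) h) +
      (-6 : A) * (hskew12 (x1 * y3) (f h x2 y2) x3) +
      (-6 : A) * (q12_3 x3 x2 y2 (x1 * y3) h) +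
      (6 : A) * (hskew23 (x1 * y3) h (f x2 x3 y2)) +
      (-6 : A) * (hskew12 (x1 * y3) (f x2 x3 y2) h) +
      (-6 : A) * (q12_2 x2 h y2 (x1 * y3) x3) +
      (6 : A) * (hskew12 (x1 * y3) (f h x2 y2) x3) +
      (-6 : A) * (q12_3 x3 h y2 (x1 * y3) x2) +
      (6 : A) * (hskew23 (x1 * y3) x2 (f h x3 y2)) +
      (-6 : A) * (hskew12 (x1 * y3) (f h x3 y2) x2) +
      (-6 : A) * (q12_1 x2 (x1 * y2) h x3 y3) +
      (6 : A) * (q23_1 (x1 * y2) x2 h x3 y3) +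
      (-6 : A) * (q12_2 x3 (x1 * y2) h x2 y3) +
      (6 : A) * (q23_2 (x1 * y2) x3 h x2 y3) +
      (-6 : A) * (hskew12 x2 (f (x1 * y2) h x3) y3) +
      (-6 : A) * (q12_3 y3 (x1 * y2) h x2 x3) +
      (6 : A) * (q23_3 (x1 * y2) y3 h x2 x3) +
      (-6 : A) * (hskew23 x2 x3 (f (x1 * y2) h y3)) +
      (6 : A) * (hskew12 x2 (f (x1 * y2) h y3) x3) +
      (-6 : A) * (hskew12 (x1 * y2) (f h x3 y3) x2) +
      (-6 : A) * (hskew23 (x1 * y2) h (f x2 x3 y3)) +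
      (6 : A) * (hskew12 (x1 * y2) (f x2 x3 y3) h) +
      (6 : A) * (hskew12 (x1 * y2) (f h x2 y3) x3) +
      (6 : A) * (q12_3 x3 x2 y3 (x1 * y2) h) +
      (-6 : A) * (hskew23 (x1 * y2) h (f x2 x3 y3)) +
      (6 : A) * (hskew12 (x1 * y2) (f x2 x3 y3) h) +
      (6 : A) * (q12_2 x2 h y3 (x1 * y2) x3) +
      (-6 : A) * (hskew12 (x1 * y2) (f h x2 y3) x3) +
      (6 : A) * (q12_3 x3 h y3 (x1 * y2) x2) +
      (-6 : A) * (hskew23 (x1 * y2) x2 (f h x3 y3)) +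
      (6 : A) * (hskew12 (x1 * y2) (f h x3 y3) x2) +
      (-6 : A) * (hskew23 (f x2 x3 y3) h (x1 * y2)) +
      (-72 : A) * ((x1) * (q12_2 x3 x2 y3 h y2)) +
      (72 : A) * ((x1) * (hskew12 h (f x2 x3 y3) y2)) +
      (-72 : A) * ((x1) * (q12_3 y2 x2 y3 h x3)) +
      (72 : A) * ((x1) * (hskew23 h x3 (f x2 y2 y3))) +
      (-72 : A) * ((x1) * (hskew12 h (f x2 y2 y3) x3)) +
      (-81 : A) * ((x1) * (hskew12 h (f x2 x3 y2) y3)) +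
      (-81 : A) * ((x1) * (q12_3 y3 x3 y2 h x2)) +
      (81 : A) * ((x1) * (q23_3 x3 y3 y2 h x2)) +
      (-81 : A) * ((x1) * (hskew23 h x2 (f x3 y2 y3))) +
      (81 : A) * ((x1) * (hskew12 h (f x3 y2 y3) x2)) +
      (-4 : A) * (q12_1 x2 (x3 * y3) y2 h x1) +
      (9 : A) * ((h) * (hskew12 x1 (f x2 y2 y3) x3)) +
      (9 : A) * ((h) * (hskew23 x1 x2 (f x3 y2 y3))) +
      (-9 : A) * ((h) * (hskew12 x1 (f x3 y2 y3) x2)) +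
      (3 : A) * (hskew12 h ((f x1 x2 y2) * x3) y3) +
      (3 : A) * (hskew23 h x3 ((f x1 x2 y2) * y3)) +
      (-3 : A) * (hskew12 h ((f x1 x2 y2) * y3) x3) +
      (-3 : A) * (hskew23 (f x1 x2 y2) x3 (h * y3)) +
      (9 : A) * ((h) * (hskew12 x1 (f x2 x3 y3) y2)) +
      (9 : A) * ((h) * (q12_3 y2 x3 y3 x1 x2)) +
      (-9 : A) * ((h) * (hskew23 x1 x2 (f x3 y2 y3))) +
      (9 : A) * ((h) * (hskew12 x1 (f x3 y2 y3) x2)) +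
      (-3 : A) * (hskew12 h ((f x1 x2 y3) * x3) y2) +
      (-3 : A) * (hskew23 h x3 ((f x1 x2 y3) * y2)) +
      (3 : A) * (hskew12 h ((f x1 x2 y3) * y2) x3) +
      (3 : A) * (hskew23 (f x1 x2 y3) x3 (h * y2)) +
      (27 : A) * ((h) * (hskew12 x1 (f x2 x3 y2) y3)) +
      (27 : A) * ((h) * (q12_3 y3 x3 y2 x1 x2)) +
      (-27 : A) * ((h) * (q23_3 x3 y3 y2 x1 x2)) +
      (27 : A) * ((h) * (hskew23 x1 x2 (f x3 y2 y3))) +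
      (-27 : A) * ((h) * (hskew12 x1 (f x3 y2 y3) x2)) +
      (-3 : A) * (hskew12 h ((f x1 x3 y2) * x2) y3) +
      (-3 : A) * (hskew23 h x2 ((f x1 x3 y2) * y3)) +
      (3 : A) * (hskew12 h ((f x1 x3 y2) * y3) x2) +
      (3 : A) * (hskew23 (f x1 x3 y2) x2 (h * y3)) +
      (3 : A) * (hskew12 h ((f x1 x3 y3) * x2) y2) +
      (3 : A) * (hskew23 h x2 ((f x1 x3 y3) * y2)) +
      (-3 : A) * (hskew12 h ((f x1 x3 y3) * y2) x2) +
      (-3 : A) * (hskew23 (f x1 x3 y3) x2 (h * y2)) +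
      (18 : A) * ((x3) * (q12_1 x1 h y3 x2 y2)) +
      (18 : A) * ((x3) * (q12_2 x2 h y3 x1 y2)) +
      (-18 : A) * ((x3) * (hskew12 x1 (f h x2 y3) y2)) +
      (18 : A) * ((x3) * (q12_3 y2 h y3 x1 x2)) +
      (-18 : A) * ((x3) * (hskew23 x1 x2 (f h y2 y3))) +
      (18 : A) * ((x3) * (hskew12 x1 (f h y2 y3) x2)) +
      (9 : A) * (hskew12 x1 ((f h y2 y3) * x2) x3) +
      (9 : A) * (hskew23 x1 x2 ((f h y2 y3) * x3)) +
      (-9 : A) * (hskew12 x1 ((f h y2 y3) * x3) x2) +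
      (-9 : A) * (hskew23 (f h y2 y3) x2 (x1 * x3)) +
      (3 : A) * (hskew12 x1 ((f h x2 y3) * x3) y2) +
      (3 : A) * (hskew23 x1 x3 ((f h x2 y3) * y2)) +
      (-3 : A) * (hskew12 x1 ((f h x2 y3) * y2) x3) +
      (-3 : A) * (hskew23 (f h x2 y3) x3 (x1 * y2)) +
      (-18 : A) * ((x2) * (q12_1 x1 h y3 x3 y2)) +
      (-18 : A) * ((x2) * (q12_2 x3 h y3 x1 y2)) +
      (18 : A) * ((x2) * (hskew12 x1 (f h x3 y3) y2)) +
      (-18 : A) * ((x2) * (q12_3 y2 h y3 x1 x3)) +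
      (18 : A) * ((x2) * (hskew23 x1 x3 (f h y2 y3))) +
      (-18 : A) * ((x2) * (hskew12 x1 (f h y2 y3) x3)) +
      (18 : A) * ((x1) * (q12_1 x2 h y3 x3 y2)) +
      (18 : A) * ((x1) * (q12_2 x3 h y3 x2 y2)) +
      (-18 : A) * ((x1) * (hskew12 x2 (f h x3 y3) y2)) +
      (18 : A) * ((x1) * (q12_3 y2 h y3 x2 x3)) +
      (-18 : A) * ((x1) * (hskew23 x2 x3 (f h y2 y3))) +
      (18 : A) * ((x1) * (hskew12 x2 (f h y2 y3) x3)) +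
      (-3 : A) * (hskew12 x1 ((f h x3 y3) * x2) y2) +
      (-3 : A) * (hskew23 x1 x2 ((f h x3 y3) * y2)) +
      (3 : A) * (hskew12 x1 ((f h x3 y3) * y2) x2) +
      (3 : A) * (hskew23 (f h x3 y3) x2 (x1 * y2)) +
      (9 : A) * ((y3) * (hskew12 h (f x1 x2 y2) x3)) +
      (9 : A) * ((y3) * (q12_3 x3 x2 y2 h x1)) +
      (-9 : A) * ((y3) * (hskew23 h x1 (f x2 x3 y2))) +
      (9 : A) * ((y3) * (hskew12 h (f x2 x3 y2) x1)) +
      (3 : A) * (hskew12 x2 ((f h x1 x3) * y2) y3) +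
      (3 : A) * (hskew23 x2 y2 ((f h x1 x3) * y3)) +
      (-3 : A) * (hskew12 x2 ((f h x1 x3) * y3) y2) +
      (-3 : A) * (hskew23 (f h x1 x3) y2 (x2 * y3)) +
      (-9 : A) * ((y2) * (hskew12 h (f x1 x2 y3) x3)) +
      (-9 : A) * ((y2) * (q12_3 x3 x2 y3 h x1)) +
      (9 : A) * ((y2) * (hskew23 h x1 (f x2 x3 y3))) +
      (-9 : A) * ((y2) * (hskew12 h (f x2 x3 y3) x1)) +
      (18 : A) * ((h) * (q12_2 x3 x2 y3 x1 y2)) +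
      (-18 : A) * ((h) * (hskew12 x1 (f x2 x3 y3) y2)) +
      (18 : A) * ((h) * (q12_3 y2 x2 y3 x1 x3)) +
      (-18 : A) * ((h) * (hskew23 x1 x3 (f x2 y2 y3))) +
      (18 : A) * ((h) * (hskew12 x1 (f x2 y2 y3) x3)) +
      (9 : A) * ((x2) * (hskew12 h (f x1 y2 y3) x3)) +
      (9 : A) * ((x2) * (hskew23 h x1 (f x3 y2 y3))) +
      (-9 : A) * ((x2) * (hskew12 h (f x3 y2 y3) x1)) +
      (-3 : A) * (hskew12 x1 ((f h x2 y2) * x3) y3) +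
      (-3 : A) * (hskew23 x1 x3 ((f h x2 y2) * y3)) +
      (3 : A) * (hskew12 x1 ((f h x2 y2) * y3) x3) +
      (3 : A) * (hskew23 (f h x2 y2) x3 (x1 * y3)) +
      (-3 : A) * (hskew12 h ((f x2 y2 y3) * x1) x3) +
      (-3 : A) * (hskew23 h x1 ((f x2 y2 y3) * x3)) +
      (3 : A) * (hskew12 h ((f x2 y2 y3) * x3) x1) +
      (-9 : A) * ((x1) * (hskew12 h (f x2 x3 y3) y2)) +
      (-9 : A) * ((x1) * (q12_3 y2 x3 y3 h x2)) +
      (9 : A) * ((x1) * (hskew23 h x2 (f x3 y2 y3))) +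
      (-9 : A) * ((x1) * (hskew12 h (f x3 y2 y3) x2)) +
      (-9 : A) * ((y3) * (hskew12 h (f x1 x3 y2) x2)) +
      (-9 : A) * ((y3) * (hskew23 h x1 (f x2 x3 y2))) +
      (9 : A) * ((y3) * (hskew12 h (f x2 x3 y2) x1)) +
      (-3 : A) * (hskew12 x3 ((f h x1 x2) * y2) y3) +
      (-3 : A) * (hskew23 x3 y2 ((f h x1 x2) * y3)) +
      (3 : A) * (hskew12 x3 ((f h x1 x2) * y3) y2) +
      (3 : A) * (hskew23 (f h x1 x2) y2 (x3 * y3)) +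
      (9 : A) * ((y2) * (hskew12 h (f x1 x3 y3) x2)) +
      (9 : A) * ((y2) * (hskew23 h x1 (f x2 x3 y3))) +
      (-9 : A) * ((y2) * (hskew12 h (f x2 x3 y3) x1)) +
      (-9 : A) * ((x3) * (hskew12 h (f x1 y2 y3) x2)) +
      (-9 : A) * ((x3) * (hskew23 h x1 (f x2 y2 y3))) +
      (9 : A) * ((x3) * (hskew12 h (f x2 y2 y3) x1)) +
      (3 : A) * (hskew12 h ((f x1 y2 y3) * x2) x3) +
      (3 : A) * (hskew23 h x2 ((f x1 y2 y3) * x3)) +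
      (-3 : A) * (hskew12 h ((f x1 y2 y3) * x3) x2) +
      (3 : A) * (hskew12 x1 ((f h x3 y2) * x2) y3) +
      (3 : A) * (hskew23 x1 x2 ((f h x3 y2) * y3)) +
      (-3 : A) * (hskew12 x1 ((f h x3 y2) * y3) x2) +
      (-3 : A) * (hskew23 (f h x3 y2) x2 (x1 * y3)) +
      (3 : A) * (hskew12 h ((f x3 y2 y3) * x1) x2) +
      (3 : A) * (hskew23 h x1 ((f x3 y2 y3) * x2)) +
      (-3 : A) * (hskew12 h ((f x3 y2 y3) * x2) x1) +
      (-18 : A) * ((h) * (q12_1 x2 x1 y3 x3 y2)) +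
      (-18 : A) * ((h) * (q12_2 x3 x1 y3 x2 y2)) +
      (18 : A) * ((h) * (hskew12 x2 (f x1 x3 y3) y2)) +
      (-18 : A) * ((h) * (q12_3 y2 x1 y3 x2 x3)) +
      (18 : A) * ((h) * (hskew23 x2 x3 (f x1 y2 y3))) +
      (-18 : A) * ((h) * (hskew12 x2 (f x1 y2 y3) x3)) +
      (-36 : A) * ((y3) * (q12_2 x2 x1 y2 h x3)) +
      (36 : A) * ((y3) * (hskew12 h (f x1 x2 y2) x3)) +
      (-36 : A) * ((y3) * (q12_3 x3 x1 y2 h x2)) +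
      (36 : A) * ((y3) * (hskew23 h x2 (f x1 x3 y2))) +
      (-36 : A) * ((y3) * (hskew12 h (f x1 x3 y2) x2)) +
      (3 : A) * (hskew12 x2 ((f h x1 y2) * x3) y3) +
      (3 : A) * (hskew23 x2 x3 ((f h x1 y2) * y3)) +
      (-3 : A) * (hskew12 x2 ((f h x1 y2) * y3) x3) +
      (-3 : A) * (hskew23 (f h x1 y2) x3 (x2 * y3)) +
      (-9 : A) * ((x3) * (hskew12 h (f x1 x2 y3) y2)) +
      (-9 : A) * ((x3) * (q12_3 y2 x2 y3 h x1)) +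
      (9 : A) * ((x3) * (hskew23 h x1 (f x2 y2 y3))) +
      (-9 : A) * ((x3) * (hskew12 h (f x2 y2 y3) x1)) +
      (9 : A) * ((x2) * (hskew12 h (f x1 x3 y3) y2)) +
      (9 : A) * ((x2) * (q12_3 y2 x3 y3 h x1)) +
      (-9 : A) * ((x2) * (hskew23 h x1 (f x3 y2 y3))) +
      (9 : A) * ((x2) * (hskew12 h (f x3 y2 y3) x1)) +
      (-3 : A) * (hskew12 x1 ((f h x2 x3) * y2) y3) +
      (-3 : A) * (hskew23 x1 y2 ((f h x2 x3) * y3)) +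
      (3 : A) * (hskew12 x1 ((f h x2 x3) * y3) y2) +
      (3 : A) * (hskew23 (f h x2 x3) y2 (x1 * y3)) +
      (9 : A) * (hskew23 (f x1 y2 y3) x2 (h * x3)) +
      (-9 : A) * ((x1) * (hskew12 h (f x2 y2 y3) x3)) +
      (-9 : A) * ((x1) * (hskew23 h x2 (f x3 y2 y3))) +
      (9 : A) * ((x1) * (hskew12 h (f x3 y2 y3) x2)) +
      (27 : A) * ((y2) * (hskew12 h (f x1 x2 x3) y3)) +
      (27 : A) * ((y2) * (q12_3 y3 x2 x3 h x1)) +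
      (-27 : A) * ((y2) * (q23_3 x2 y3 x3 h x1)) +
      (27 : A) * ((y2) * (hskew23 h x1 (f x2 x3 y3))) +
      (-27 : A) * ((y2) * (hskew12 h (f x2 x3 y3) x1)) +
      (-3 : A) * (hskew12 h ((f x2 x3 y3) * x1) y2) +
      (-3 : A) * (hskew23 h x1 ((f x2 x3 y3) * y2)) +
      (3 : A) * (hskew12 h ((f x2 x3 y3) * y2) x1) +
      (3 : A) * (hskew23 (f x2 x3 y3) x1 (h * y2)) +
      (3 : A) * (hskew12 h ((f x2 x3 y2) * x1) y3) +
      (3 : A) * (hskew23 h x1 ((f x2 x3 y2) * y3)) +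
      (-3 : A) * (hskew12 h ((f x2 x3 y2) * y3) x1) +
      (-3 : A) * (hskew23 (f x2 x3 y2) x1 (h * y3)) +
      (-3 : A) * (hskew12 x2 ((f h x1 y3) * x3) y2) +
      (-3 : A) * (hskew23 x2 x3 ((f h x1 y3) * y2)) +
      (3 : A) * (hskew12 x2 ((f h x1 y3) * y2) x3) +
      (3 : A) * (hskew23 (f h x1 y3) x3 (x2 * y2)) +
      (36 : A) * ((y2) * (q12_2 x2 x1 y3 h x3)) +
      (-36 : A) * ((y2) * (hskew12 h (f x1 x2 y3) x3)) +
      (36 : A) * ((y2) * (q12_3 x3 x1 y3 h x2)) +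
      (-36 : A) * ((y2) * (hskew23 h x2 (f x1 x3 y3))) +
      (36 : A) * ((y2) * (hskew12 h (f x1 x3 y3) x2)) +
      (-27 : A) * ((y3) * (hskew12 h (f x1 x2 x3) y2)) +
      (-27 : A) * ((y3) * (q12_3 y2 x2 x3 h x1)) +
      (27 : A) * ((y3) * (q23_3 x2 y2 x3 h x1)) +
      (-27 : A) * ((y3) * (hskew23 h x1 (f x2 x3 y2))) +
      (27 : A) * ((y3) * (hskew12 h (f x2 x3 y2) x1)) +
      (-9 : A) * (hskew12 h ((f x1 x2 x3) * y2) y3) +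
      (-9 : A) * (hskew23 h y2 ((f x1 x2 x3) * y3)) +
      (9 : A) * (hskew12 h ((f x1 x2 x3) * y3) y2)
  have h12 : (algebraMap K A) ((12 : K)⁻¹) * (12 : A) = 1 := by
    rw [show (12 : A) = algebraMap K A (12 : K) from (map_ofNat (algebraMap K A) 12).symm,
      ← map_mul, inv_mul_cancel₀ (by norm_num : (12 : K) ≠ 0), map_one]
  linear_combination (algebraMap K A ((12 : K)⁻¹)) * key -
    (f (f x1 x2 x3 * h) y2 y3 -
      (f (f x1 y2 y3 * h) x2 x3 - f (f x2 y2 y3 * h) x1 x3 + f (f x3 y2 y3 * h) x1 x2)) * h12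
end

section
/- Let A be a unital commutative associative algebra over a field of characteristic zero with a trilinear skew-symmetric bracket [·,·,·] satisfying the generalized Jacobi identity, and suppose (i) [u₁,u₂,u₃] = u₁[1,u₂,u₃] − u₂[1,u₁,u₃] + u₃[1,u₁,u₂] and (ii) [1, u₁u₂, u₃] = u₁[1,u₂,u₃] + u₂[1,u₁,u₃] for all u₁,u₂,u₃ ∈ A. Then the transposed Leibniz rule holds: 3h[a₁,a₂,a₃] = [ha₁,a₂,a₃] + [a₁,ha₂,a₃] + [a₁,a₂,ha₃] for all h,a₁,a₂,a₃ ∈ A. -/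
theorem unital_gives_transposed_leibniz {K A : Type*} [Field K] [CharZero K]
    [CommRing A] [Algebra K A]
    (f : A → A → A → A)
    (hadd1 : ∀ a b c d : A, f (a + b) c d = f a c d + f b c d)
    (hadd2 : ∀ a b c d : A, f a (b + c) d = f a b d + f a c d)
    (hadd3 : ∀ a b c d : A, f a b (c + d) = f a b c + f a b d)
    (hsmul1 : ∀ (k : K) (a b c : A), f (k • a) b c = k • f a b c)
    (hsmul2 : ∀ (k : K) (a b c : A), f a (k • b) c = k • f a b c)
    (hsmul3 : ∀ (k : K) (a b c : A), f a b (k • c) = k • f a b c)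
    (hskew12 : ∀ a b c : A, f a b c = - f b a c)
    (hskew23 : ∀ a b c : A, f a b c = - f a c b)
    (hjac : ∀ x1 x2 x3 y2 y3 : A, f (f x1 x2 x3) y2 y3 =
      f (f x1 y2 y3) x2 x3 + f x1 (f x2 y2 y3) x3 + f x1 x2 (f x3 y2 y3))
    (hcomb : ∀ u1 u2 u3 : A,
      f u1 u2 u3 = u1 * f 1 u2 u3 - u2 * f 1 u1 u3 + u3 * f 1 u1 u2)
    (hleib1 : ∀ u1 u2 u3 : A,
      f 1 (u1 * u2) u3 = u1 * f 1 u2 u3 + u2 * f 1 u1 u3) :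
    ∀ h a1 a2 a3 : A, 3 * (h * f a1 a2 a3) =
      f (h * a1) a2 a3 + f a1 (h * a2) a3 + f a1 a2 (h * a3) := by
  intro h a1 a2 a3
  rw [hcomb a1 a2 a3, hcomb (h*a1) a2 a3, hcomb a1 (h*a2) a3, hcomb a1 a2 (h*a3),
      hskew23 1 a1 (h*a2), hskew23 1 a1 (h*a3), hskew23 1 a2 (h*a3),
      hleib1 h a1 a3, hleib1 h a1 a2, hleib1 h a2 a3, hleib1 h a2 a1,
      hleib1 h a3 a1, hleib1 h a3 a2,
      hskew23 1 a2 a1, hskew23 1 a3 a1, hskew23 1 a3 a2]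
  ring
end

section
/- Let A be a unital commutative associative algebra over a field of characteristic zero with a trilinear skew-symmetric bracket [·,·,·] satisfying (i) [u₁,u₂,u₃] = u₁[1,u₂,u₃] − u₂[1,u₁,u₃] + u₃[1,u₁,u₂] and (ii) [1, u₁u₂, u₃] = u₁[1,u₂,u₃] + u₂[1,u₁,u₃]. Then the strong condition holds: y₁[hy₂,x₁,x₂] − y₂[hy₁,x₁,x₂] + hx₁[y₁,y₂,x₂] − hx₂[y₁,y₂,x₁] = 0 for all h,y₁,y₂,x₁,x₂ ∈ A. -/
theorem unital_gives_strong_condition {K A : Type*} [Field K] [CharZero K]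
    [CommRing A] [Algebra K A]
    (f : A → A → A → A)
    (hadd1 : ∀ a b c d : A, f (a + b) c d = f a c d + f b c d)
    (hadd2 : ∀ a b c d : A, f a (b + c) d = f a b d + f a c d)
    (hadd3 : ∀ a b c d : A, f a b (c + d) = f a b c + f a b d)
    (hsmul1 : ∀ (k : K) (a b c : A), f (k • a) b c = k • f a b c)
    (hsmul2 : ∀ (k : K) (a b c : A), f a (k • b) c = k • f a b c)
    (hsmul3 : ∀ (k : K) (a b c : A), f a b (k • c) = k • f a b c)
    (hskew12 : ∀ a b c : A, f a b c = - f b a c)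
    (hskew23 : ∀ a b c : A, f a b c = - f a c b)
    (hcomb : ∀ u1 u2 u3 : A,
      f u1 u2 u3 = u1 * f 1 u2 u3 - u2 * f 1 u1 u3 + u3 * f 1 u1 u2)
    (hleib1 : ∀ u1 u2 u3 : A,
      f 1 (u1 * u2) u3 = u1 * f 1 u2 u3 + u2 * f 1 u1 u3) :
    ∀ h y1 y2 x1 x2 : A,
      y1 * f (h * y2) x1 x2 - y2 * f (h * y1) x1 x2
        + h * x1 * f y1 y2 x2 - h * x2 * f y1 y2 x1 = 0 := by
  intro h y1 y2 x1 x2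
  rw [hcomb (h * y2) x1 x2, hcomb (h * y1) x1 x2, hcomb y1 y2 x2, hcomb y1 y2 x1,
    hleib1 h y2 x1, hleib1 h y2 x2, hleib1 h y1 x1, hleib1 h y1 x2]
  ring
end

section
/- Let A be a commutative associative algebra over a field of characteristic zero with two commuting derivations D₁, D₂, and define W(u₁,u₂,u₃) as the 3×3 determinant with rows (u₁,u₂,u₃), (D₁u₁,D₁u₂,D₁u₃), (D₂u₁,D₂u₂,D₂u₃). Then W satisfies the transposed Leibniz rule: 3h·W(a₁,a₂,a₃) = W(ha₁,a₂,a₃) + W(a₁,ha₂,a₃) + W(a₁,a₂,ha₃) for all h,a₁,a₂,a₃ ∈ A. -/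
theorem W_transposed_leibniz {K A : Type*} [Field K] [CharZero K] [CommRing A] [Algebra K A]
    (D1 D2 : Derivation K A A) (hcomm : ∀ a : A, D1 (D2 a) = D2 (D1 a))
    (W : A → A → A → A)
    (hW : ∀ u1 u2 u3 : A, W u1 u2 u3 =
      u1 * (D1 u2 * D2 u3 - D2 u2 * D1 u3)
      - u2 * (D1 u1 * D2 u3 - D2 u1 * D1 u3)
      + u3 * (D1 u1 * D2 u2 - D2 u1 * D1 u2)) :
    ∀ h a1 a2 a3 : A, 3 * (h * W a1 a2 a3) =
      W (h * a1) a2 a3 + W a1 (h * a2) a3 + W a1 a2 (h * a3) := by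
  intro h a1 a2 a3
  simp only [hW, Derivation.leibniz, smul_eq_mul]
  ring
end

section
/- In any transposed Poisson 3-Lie algebra (A, ·, [·,·,·]) over a field of characteristic zero, for all h, x₁,x₂,x₃, y₂,y₃ ∈ A: [[x₁,x₂,x₃], y₂h, y₃] + [[x₁,x₂,x₃], y₂, y₃h] = Σᵢ₌₁³ (−1)^{i−1} Σ_{j≠i} [[xᵢ,y₂,y₃], x_{list with xⱼ replaced by xⱼh, xᵢ omitted}]. -/
theorem tp3_inside_identity {K A : Type*} [Field K] [CharZero K] [CommRing A] [Algebra K A]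
    (f : A → A → A → A)
    (hadd1 : ∀ a b c d : A, f (a + b) c d = f a c d + f b c d)
    (hadd2 : ∀ a b c d : A, f a (b + c) d = f a b d + f a c d)
    (hadd3 : ∀ a b c d : A, f a b (c + d) = f a b c + f a b d)
    (hsmul1 : ∀ (k : K) (a b c : A), f (k • a) b c = k • f a b c)
    (hsmul2 : ∀ (k : K) (a b c : A), f a (k • b) c = k • f a b c)
    (hsmul3 : ∀ (k : K) (a b c : A), f a b (k • c) = k • f a b c)
    (hskew12 : ∀ a b c : A, f a b c = - f b a c)
    (hskew23 : ∀ a b c : A, f a b c = - f a c b)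
    (hjac : ∀ x1 x2 x3 y2 y3 : A, f (f x1 x2 x3) y2 y3 =
      f (f x1 y2 y3) x2 x3 + f x1 (f x2 y2 y3) x3 + f x1 x2 (f x3 y2 y3))
    (hleib : ∀ h a1 a2 a3 : A, 3 * (h * f a1 a2 a3) =
      f (h * a1) a2 a3 + f a1 (h * a2) a3 + f a1 a2 (h * a3)) :
    ∀ h x1 x2 x3 y2 y3 : A,
      f (f x1 x2 x3) (y2 * h) y3 + f (f x1 x2 x3) y2 (y3 * h) =
        (f (f x1 y2 y3) (x2 * h) x3 + f (f x1 y2 y3) x2 (x3 * h))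
        - (f (f x2 y2 y3) (x1 * h) x3 + f (f x2 y2 y3) x1 (x3 * h))
        + (f (f x3 y2 y3) (x1 * h) x2 + f (f x3 y2 y3) x1 (x2 * h)) := by
  -- derived linearity lemmas
  have hneg1 : ∀ a b c : A, f (-a) b c = - f a b c := by
    intro a b c; rw [← neg_one_smul K a, hsmul1, neg_one_smul]
  have hneg2 : ∀ a b c : A, f a (-b) c = - f a b c := by
    intro a b c; rw [← neg_one_smul K b, hsmul2, neg_one_smul]
  have hneg3 : ∀ a b c : A, f a b (-c) = - f a b c := by
    intro a b c; rw [← neg_one_smul K c, hsmul3, neg_one_smul]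
  have hsub1 : ∀ a b c d : A, f (a - b) c d = f a c d - f b c d := by
    intro a b c d; rw [sub_eq_add_neg, hadd1, hneg1, sub_eq_add_neg]
  have hsub2 : ∀ a b c d : A, f a (b - c) d = f a b d - f a c d := by
    intro a b c d; rw [sub_eq_add_neg, hadd2, hneg2, sub_eq_add_neg]
  have hsub3 : ∀ a b c d : A, f a b (c - d) = f a b c - f a b d := by
    intro a b c d; rw [sub_eq_add_neg, hadd3, hneg3, sub_eq_add_neg]
  have h3a : ∀ a b c : A, f (3 * a) b c = 3 * f a b c := by
    intro a b c; rw [show (3:A) * a = a + a + a by ring, hadd1, hadd1]; ring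
  have h3b : ∀ a b c : A, f a (3 * b) c = 3 * f a b c := by
    intro a b c; rw [show (3:A) * b = b + b + b by ring, hadd2, hadd2]; ring
  have h3c : ∀ a b c : A, f a b (3 * c) = 3 * f a b c := by
    intro a b c; rw [show (3:A) * c = c + c + c by ring, hadd3, hadd3]; ring
  have cancel2 : ∀ x y : A, x + x = y + y → x = y := by
    intro x y hxy
    have h2 : (2:K) • x = (2:K) • y := by rw [two_smul, two_smul]; exact hxy
    have h3 := congrArg (fun z => (2:K)⁻¹ • z) h2
    simpa [smul_smul, inv_mul_cancel₀ (two_ne_zero (α := K)), one_smul] using h3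
  intro h x1 x2 x3 y2 y3
  rw [mul_comm y2 h, mul_comm y3 h, mul_comm x1 h, mul_comm x2 h, mul_comm x3 h]
  -- expand f (3*(h*F)) y2 y3
  have E4 : 3 * f (h * f x1 x2 x3) y2 y3 =
      f (f (h*x1) x2 x3) y2 y3 + f (f x1 (h*x2) x3) y2 y3 + f (f x1 x2 (h*x3)) y2 y3 := by
    have := congrArg (fun t => f t y2 y3) (hleib h x1 x2 x3)
    simpa only [h3a, hadd1] using this
  have B1eq : f (f (h*x1) y2 y3) x2 x3 = 3 * f (h * f x1 y2 y3) x2 x3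
      - f (f x1 (h*y2) y3) x2 x3 - f (f x1 y2 (h*y3)) x2 x3 := by
    have h1 : f (h*x1) y2 y3 = 3 * (h * f x1 y2 y3) - f x1 (h*y2) y3 - f x1 y2 (h*y3) := by
      linear_combination - hleib h x1 y2 y3
    rw [h1, hsub1, hsub1, h3a]
  have C2eq : f x1 (f (h*x2) y2 y3) x3 = 3 * f x1 (h * f x2 y2 y3) x3
      - f x1 (f x2 (h*y2) y3) x3 - f x1 (f x2 y2 (h*y3)) x3 := by
    have h1 : f (h*x2) y2 y3 = 3 * (h * f x2 y2 y3) - f x2 (h*y2) y3 - f x2 y2 (h*y3) := by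
      linear_combination - hleib h x2 y2 y3
    rw [h1, hsub2, hsub2, h3b]
  have D3eq : f x1 x2 (f (h*x3) y2 y3) = 3 * f x1 x2 (h * f x3 y2 y3)
      - f x1 x2 (f x3 (h*y2) y3) - f x1 x2 (f x3 y2 (h*y3)) := by
    have h1 : f (h*x3) y2 y3 = 3 * (h * f x3 y2 y3) - f x3 (h*y2) y3 - f x3 y2 (h*y3) := by
      linear_combination - hleib h x3 y2 y3
    rw [h1, hsub3, hsub3, h3c]
  -- key identity : f (h*F) y2 y3 = f (h*G1) x2 x3 + f x1 (h*G2) x3 + f x1 x2 (h*G3)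
  have hC : f (h * f x1 x2 x3) y2 y3 =
      f (h * f x1 y2 y3) x2 x3 + f x1 (h * f x2 y2 y3) x3 + f x1 x2 (h * f x3 y2 y3) := by
    apply cancel2
    linear_combination E4 + hjac (h*x1) x2 x3 y2 y3 + hjac x1 (h*x2) x3 y2 y3
      + hjac x1 x2 (h*x3) y2 y3 + B1eq + C2eq + D3eq
      + hjac x1 x2 x3 (h*y2) y3 + hjac x1 x2 x3 y2 (h*y3)
      - hleib h (f x1 y2 y3) x2 x3 - hleib h x1 (f x2 y2 y3) x3 - hleib h x1 x2 (f x3 y2 y3)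
      + hleib h (f x1 x2 x3) y2 y3 - (3*h) * hjac x1 x2 x3 y2 y3
  -- skew conversions
  have sk1 : f x1 (f x2 y2 y3) x3 = - f (f x2 y2 y3) x1 x3 := hskew12 _ _ _
  have sk2 : f x1 x2 (f x3 y2 y3) = f (f x3 y2 y3) x1 x2 := by
    rw [hskew23 x1 x2 (f x3 y2 y3), hskew12 x1 (f x3 y2 y3) x2, neg_neg]
  have sk3 : f x1 (h * f x2 y2 y3) x3 = - f (h * f x2 y2 y3) x1 x3 := hskew12 _ _ _
  have sk4 : f x1 x2 (h * f x3 y2 y3) = f (h * f x3 y2 y3) x1 x2 := by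
    rw [hskew23 x1 x2 (h * f x3 y2 y3), hskew12 x1 (h * f x3 y2 y3) x2, neg_neg]
  linear_combination - hleib h (f x1 x2 x3) y2 y3 + hleib h (f x1 y2 y3) x2 x3
    - hleib h (f x2 y2 y3) x1 x3 + hleib h (f x3 y2 y3) x1 x2
    - hC - sk3 - sk4 + (3*h) * hjac x1 x2 x3 y2 y3 + (3*h) * sk1 + (3*h) * sk2
end

section
/- Let (A, ·, [·,·,·]) be a transposed Poisson 3-Lie algebra over a field of characteristic zero with [A,A,A] = A (the span of all brackets is all of A). If I is an ideal of the 3-Lie algebra (A, [·,·,·]) (i.e., [I,A,A] ⊆ I), then I is a quasi-ideal: [A·I, A, A] ⊆ I. -/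
theorem ideal_is_quasi_ideal {K A : Type*} [Field K] [CharZero K]
    [CommRing A] [Algebra K A]
    (f : A → A → A → A)
    (hadd1 : ∀ a b c d : A, f (a + b) c d = f a c d + f b c d)
    (hadd2 : ∀ a b c d : A, f a (b + c) d = f a b d + f a c d)
    (hadd3 : ∀ a b c d : A, f a b (c + d) = f a b c + f a b d)
    (hsmul1 : ∀ (k : K) (a b c : A), f (k • a) b c = k • f a b c)
    (hsmul2 : ∀ (k : K) (a b c : A), f a (k • b) c = k • f a b c)
    (hsmul3 : ∀ (k : K) (a b c : A), f a b (k • c) = k • f a b c)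
    (hskew12 : ∀ a b c : A, f a b c = - f b a c)
    (hskew23 : ∀ a b c : A, f a b c = - f a c b)
    (hjac : ∀ x1 x2 x3 y2 y3 : A, f (f x1 x2 x3) y2 y3 =
      f (f x1 y2 y3) x2 x3 + f x1 (f x2 y2 y3) x3 + f x1 x2 (f x3 y2 y3))
    (hleib : ∀ h a1 a2 a3 : A, 3 * (h * f a1 a2 a3) =
      f (h * a1) a2 a3 + f a1 (h * a2) a3 + f a1 a2 (h * a3))
    (hgen : Submodule.span K {x : A | ∃ a b c : A, x = f a b c} = ⊤)
    (I : Submodule K A)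
    (hideal : ∀ x ∈ I, ∀ a b : A, f x a b ∈ I) :
    ∀ x ∈ I, ∀ a b c : A, f (a * x) b c ∈ I := by
  -- scalar helpers
  have h3K : ∀ s : A, (3 : A) * s = (3 : K) • s := by
    intro s; rw [Algebra.smul_def, map_ofNat]
  have h6K : ∀ s : A, (6 : A) * s = (6 : K) • s := by
    intro s; rw [Algebra.smul_def, map_ofNat]
  have divK : ∀ (n : K), n ≠ 0 → ∀ y : A, n • y ∈ I → y ∈ I := by
    intro n hn y hy
    have h2 := I.smul_mem n⁻¹ hy
    rwa [smul_smul, inv_mul_cancel₀ hn, one_smul] at h2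
  have mem3 : ∀ j : A, j ∈ I → (3 : A) * j ∈ I := by
    intro j hj
    have h : (3 : A) * j = j + j + j := by ring
    rw [h]; exact add_mem (add_mem hj hj) hj
  -- linearity helpers
  have fneg1 : ∀ s u v : A, f (-s) u v = - f s u v := by
    intro s u v
    simpa [neg_one_smul] using hsmul1 (-1 : K) s u v
  have fneg2 : ∀ s u v : A, f s (-u) v = - f s u v := by
    intro s u v
    simpa [neg_one_smul] using hsmul2 (-1 : K) s u v
  have fsub1 : ∀ s t u v : A, f (s - t) u v = f s u v - f t u v := by
    intro s t u v
    rw [sub_eq_add_neg, hadd1, fneg1, ← sub_eq_add_neg]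
  have fmul3 : ∀ s u v : A, f ((3 : A) * s) u v = (3 : A) * f s u v := by
    intro s u v
    rw [h3K s, hsmul1, h3K (f s u v)]
  have fzero2 : ∀ s v : A, f s 0 v = 0 := by
    intro s v
    simpa using hsmul2 (0 : K) s 0 v
  -- key exact equation for f (f (a*x) b c) u v
  have key_eq : ∀ x a b c u v : A, f (f (a*x) b c) u v
      = (9 : A) * (a * f (f x b c) u v)
        - (3 : A) * f (f x b c) (a*u) v - (3 : A) * f (f x b c) u (a*v)
        - f (f x (a*b) c) u v - f (f x b (a*c)) u v := by
    intro x a b c u v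
    have e0 : f (a*x) b c = (3 : A) * (a * f x b c) - f x (a*b) c - f x b (a*c) := by
      linear_combination -hleib a x b c
    rw [e0, fsub1, fsub1, fmul3]
    have efa : f (a * f x b c) u v
        = (3 : A) * (a * f (f x b c) u v) - f (f x b c) (a*u) v - f (f x b c) u (a*v) := by
      linear_combination -hleib a (f x b c) u v
    rw [efa]; ring
  -- fact2: f (f (a*x) b c) u v ≡ 9 a f (f x b c) u v mod I
  have fact2 : ∀ x, x ∈ I → ∀ a b c u v : A,
      f (f (a*x) b c) u v - (9 : A) * (a * f (f x b c) u v) ∈ I := by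
    intro x hx a b c u v
    have e : f (f (a*x) b c) u v - (9 : A) * (a * f (f x b c) u v)
        = -((3 : A) * f (f x b c) (a*u) v) - (3 : A) * f (f x b c) u (a*v)
          - f (f x (a*b) c) u v - f (f x b (a*c)) u v := by
      linear_combination key_eq x a b c u v
    rw [e]
    have hm : f x b c ∈ I := hideal x hx b c
    exact sub_mem (sub_mem (sub_mem (neg_mem (mem3 _ (hideal _ hm _ _)))
      (mem3 _ (hideal _ hm _ _))) (hideal _ (hideal x hx _ _) _ _))
      (hideal _ (hideal x hx _ _) _ _)
  -- L1
  have L1 : ∀ x, x ∈ I → ∀ a b c u v : A,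
      a * f x (f b u v) c + a * f x b (f c u v) ∈ I := by
    intro x hx a b c u v
    have main : (6 : A) * (a * f x (f b u v) c + a * f x b (f c u v))
        = (f (f (a*x) u v) b c - (9 : A) * (a * f (f x u v) b c))
          - (f (f (a*x) b c) u v - (9 : A) * (a * f (f x b c) u v))
          - f x (a * f b u v) c - f x (f b u v) (a*c)
          - f x (a*b) (f c u v) - f x b (a * f c u v) := by
      linear_combination (hjac (a*x) b c u v) - (hleib a x (f b u v) c)
        - (hleib a x b (f c u v)) - ((9 : A) * a) * (hjac x b c u v)
    have h6 : (6 : A) * (a * f x (f b u v) c + a * f x b (f c u v)) ∈ I := by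
      rw [main]
      exact sub_mem (sub_mem (sub_mem (sub_mem (sub_mem (fact2 x hx a u v b c)
        (fact2 x hx a b c u v)) (hideal x hx _ _)) (hideal x hx _ _))
        (hideal x hx _ _)) (hideal x hx _ _)
    rw [h6K] at h6
    exact divK 6 (by norm_num) _ h6
  -- symmetry
  have Lsym : ∀ x, x ∈ I → ∀ a u v b c : A,
      a * f x (f b u v) c - a * f x (f c u v) b ∈ I := by
    intro x hx a u v b c
    have e : a * f x (f b u v) c - a * f x (f c u v) b
        = a * f x (f b u v) c + a * f x b (f c u v) := by
      rw [hskew23 x b (f c u v)]; ring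
    rw [e]
    exact L1 x hx a b c u v
  -- KEY: a * f x (f b u v) c ∈ I
  have KEY : ∀ x, x ∈ I → ∀ a b u v c : A, a * f x (f b u v) c ∈ I := by
    intro x hx a b u v c
    have m1 := Lsym x hx a u v b c
    have m2 := Lsym x hx a c v u b
    have m3 := Lsym x hx a b v c u
    have E1 : f x (f c u v) b = - f x (f u c v) b := by
      rw [hskew12 c u v, fneg2]
    have E2 : f x (f b c v) u = - f x (f c b v) u := by
      rw [hskew12 b c v, fneg2]
    have E3 : f x (f u b v) c = - f x (f b u v) c := by
      rw [hskew12 u b v, fneg2]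
    have eq2F : a * f x (f b u v) c + a * f x (f b u v) c
        = (a * f x (f b u v) c - a * f x (f c u v) b)
          - (a * f x (f u c v) b - a * f x (f b c v) u)
          + (a * f x (f c b v) u - a * f x (f u b v) c) := by
      linear_combination a * E1 - a * E2 + a * E3
    have h2F : a * f x (f b u v) c + a * f x (f b u v) c ∈ I := by
      rw [eq2F]
      exact add_mem (sub_mem m1 m2) m3
    refine divK 2 (by norm_num) _ ?_
    rwa [two_smul]
  -- finish
  intro x hx a b c
  have hb : ∀ w : A, a * f x w c ∈ I := by
    intro w
    have hw : w ∈ Submodule.span K {y : A | ∃ p q r : A, y = f p q r} := by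
      rw [hgen]; exact Submodule.mem_top
    induction hw using Submodule.span_induction with
    | mem y hy =>
        obtain ⟨p, q, r, rfl⟩ := hy
        exact KEY x hx a p q r c
    | zero => rw [fzero2, mul_zero]; exact zero_mem I
    | add y z _ _ hy hz => rw [hadd2, mul_add]; exact add_mem hy hz
    | smul k y _ hy => rw [hsmul2, mul_smul_comm]; exact I.smul_mem k hy
  have e : f (a*x) b c = (3 : A) * (a * f x b c) - f x (a*b) c - f x b (a*c) := by
    linear_combination -hleib a x b c
  rw [e]
  exact sub_mem (sub_mem (mem3 _ (hb b)) (hideal x hx _ _)) (hideal x hx _ _)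
end

section
/- Let (A, ·, [·,·]) be a simple transposed Poisson algebra over a field of characteristic zero (no proper nonzero subspace is simultaneously an associative ideal and a Lie ideal, and A is not abelian). Then the Lie algebra (A, [·,·]) is simple. -/
theorem simple_tp_implies_lie_simple {K A : Type*} [Field K] [CharZero K]
    [CommRing A] [Algebra K A]
    (f : A → A → A)
    (hadd1 : ∀ a b c : A, f (a + b) c = f a c + f b c)
    (hadd2 : ∀ a b c : A, f a (b + c) = f a b + f a c)
    (hsmul1 : ∀ (k : K) (a b : A), f (k • a) b = k • f a b)
    (hsmul2 : ∀ (k : K) (a b : A), f a (k • b) = k • f a b)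
    (hskew : ∀ a b : A, f a b = - f b a)
    (hjac : ∀ a b c : A, f (f a b) c + f (f b c) a + f (f c a) b = 0)
    (hleib : ∀ h a b : A, 2 * (h * f a b) = f (h * a) b + f a (h * b))
    (hnonab : ∃ a b : A, f a b ≠ 0)
    (hsimple : ∀ I : Submodule K A,
      (∀ (a : A) (x : A), x ∈ I → a * x ∈ I) →
      (∀ (a : A) (x : A), x ∈ I → f x a ∈ I) → I = ⊥ ∨ I = ⊤) :
    (∃ a b : A, f a b ≠ 0) ∧
    (∀ I : Submodule K A,
      (∀ (a : A) (x : A), x ∈ I → f x a ∈ I) → I = ⊥ ∨ I = ⊤) := by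
  -- a helper to cancel 2
  have half : ∀ y : A, y + y = 0 → y = 0 := by
    intro y hy
    have h2 : (2 : K) • y = 0 := by rw [two_smul]; exact hy
    rcases smul_eq_zero.mp h2 with h | h
    · exact absurd h two_ne_zero
    · exact h
  -- introduce g a = f a 1, an opaque constant
  obtain ⟨g, hg⟩ : ∃ g : A → A, ∀ a, g a = f a 1 := ⟨_, fun _ => rfl⟩
  -- cyclic identity : a f(b,c) + b f(c,a) + c f(a,b) = 0
  have Did : ∀ a b c : A, a * f b c + b * f c a + c * f a b = 0 := by
    intro a b c
    apply half
    have h1 := hleib a b c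
    have h2 := hleib b c a
    have h3 := hleib c a b
    have e1 : f c (b * a) = - f (a * b) c := by rw [mul_comm b a, hskew]
    have e2 : f b (a * c) = - f (c * a) b := by rw [mul_comm a c, hskew]
    have e3 : f a (c * b) = - f (b * c) a := by rw [mul_comm c b, hskew]
    linear_combination h1 + h2 + h3 + e1 + e2 + e3
  -- f in terms of g
  have fform : ∀ a b : A, f a b = g a * b - g b * a := by
    intro a b
    have h := Did a b 1
    rw [one_mul] at h
    have e1 : f 1 a = - g a := by rw [hg, hskew]
    have e2 : f b 1 = g b := (hg b).symm
    linear_combination h - a * e2 - b * e1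
  -- g is a derivation
  have gderiv : ∀ a b : A, g (a * b) = a * g b + b * g a := by
    intro a b
    have h := hleib a b 1
    rw [mul_one] at h
    have e1 : f b 1 = g b := (hg b).symm
    have e2 : f (a * b) 1 = g (a * b) := (hg (a * b)).symm
    have e3 : f b a = g b * a - g a * b := fform b a
    linear_combination -h + 2 * a * e1 - e2 - e3
  have g1 : g (1 : A) = 0 := by
    apply half
    have := hskew 1 1
    rw [hg]
    linear_combination this
  have g0 : g (0 : A) = 0 := by
    have h := gderiv 0 0
    rw [mul_zero] at h
    simpa using h
  have gadd : ∀ a b : A, g (a + b) = g a + g b := by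
    intro a b; rw [hg, hg, hg, hadd1]
  have gsub : ∀ a b : A, g (a - b) = g a - g b := by
    intro a b
    have h := gadd (a - b) b
    rw [sub_add_cancel] at h
    linear_combination -h
  -- f is zero when the first argument is 0
  have fzero1 : ∀ t : A, f 0 t = 0 := by
    intro t
    have h := hadd1 0 0 t
    rw [add_zero] at h
    exact half _ (by linear_combination -2 * h)
  -- the key certificate: 4 • (c * (g a * (g b * x))) is a combination of
  -- iterated brackets of x
  have cert : ∀ a b c x : A,
      (4 : K) • (c * (g a * (g b * x))) =
        f (f x a) (b * c) + f (f x b) (a * c) - f (f x 1) (a * (b * c))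
          - f (f x c) (a * b)
          - f x (g a * (b * c)) - f x (g b * (a * c)) + f x (g c * (a * b)) := by
    intro a b c x
    rw [Algebra.smul_def, map_ofNat]
    simp only [fform, gsub, gadd, gderiv, g1, g0]
    ring
  -- hence any Lie ideal absorbs multiplication by c * g a * g b
  have memI : ∀ I : Submodule K A, (∀ (a x : A), x ∈ I → f x a ∈ I) →
      ∀ x ∈ I, ∀ a b c : A, c * (g a * (g b * x)) ∈ I := by
    intro I hI x hx a b c
    have hR : f (f x a) (b * c) + f (f x b) (a * c) - f (f x 1) (a * (b * c))
          - f (f x c) (a * b)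
          - f x (g a * (b * c)) - f x (g b * (a * c)) + f x (g c * (a * b)) ∈ I := by
      refine add_mem (sub_mem (sub_mem (sub_mem (sub_mem (add_mem ?_ ?_) ?_) ?_) ?_) ?_) ?_
      · exact hI _ _ (hI _ _ hx)
      · exact hI _ _ (hI _ _ hx)
      · exact hI _ _ (hI _ _ hx)
      · exact hI _ _ (hI _ _ hx)
      · exact hI _ _ hx
      · exact hI _ _ hx
      · exact hI _ _ hx
    have h4 : (4 : K) • (c * (g a * (g b * x))) ∈ I := by
      rw [cert]; exact hR
    have := I.smul_mem ((4 : K)⁻¹) h4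
    rwa [inv_smul_smul₀ (by norm_num : (4 : K) ≠ 0)] at this
  -- the span of elements c * g a is an ideal of the transposed Poisson algebra
  set S : Set A := {y | ∃ c a : A, y = c * g a} with hS
  set G : Submodule K A := Submodule.span K S with hG
  have hSmem : ∀ c a : A, c * g a ∈ G := by
    intro c a
    exact Submodule.subset_span ⟨c, a, rfl⟩
  have Gmul : ∀ (t y : A), y ∈ G → t * y ∈ G := by
    intro t y hy
    induction hy using Submodule.span_induction with
    | mem z hz =>
      obtain ⟨c, a, rfl⟩ := hz
      rw [← mul_assoc]; exact hSmem (t * c) a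
    | zero => rw [mul_zero]; exact G.zero_mem
    | add u v hu hv hu' hv' => rw [mul_add]; exact G.add_mem hu' hv'
    | smul k u hu hu' => rw [mul_smul_comm]; exact G.smul_mem k hu'
  have GLie : ∀ (t y : A), y ∈ G → f y t ∈ G := by
    intro t y hy
    induction hy using Submodule.span_induction with
    | mem z hz =>
      obtain ⟨c, a, rfl⟩ := hz
      have heq : f (c * g a) t =
          (c * t) * g (g a) + ((g c * t) * g a - (g t * c) * g a) := by
        simp only [fform, gderiv]
        ring
      rw [heq]
      exact G.add_mem (hSmem (c * t) (g a))
        (G.sub_mem (hSmem (g c * t) a) (hSmem (g t * c) a))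
    | zero => rw [fzero1]; exact G.zero_mem
    | add u v hu hv hu' hv' => rw [hadd1]; exact G.add_mem hu' hv'
    | smul k u hu hu' => rw [hsmul1]; exact G.smul_mem k hu'
  have hGtop : G = ⊤ := by
    rcases hsimple G (fun a x hx => Gmul a x hx) (fun a x hx => GLie a x hx) with h | h
    · exfalso
      obtain ⟨a, b, hab⟩ := hnonab
      apply hab
      have hga : g a = 0 := by
        have : g a ∈ G := by
          have := hSmem 1 a; rwa [one_mul] at this
        rw [h] at this
        simpa using this
      have hgb : g b = 0 := by
        have : g b ∈ G := by
          have := hSmem 1 b; rwa [one_mul] at this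
        rw [h] at this
        simpa using this
      rw [fform, hga, hgb, zero_mul, zero_mul, sub_zero]
    · exact h
  have h1G : (1 : A) ∈ G := by rw [hGtop]; exact Submodule.mem_top
  -- conclude : any Lie ideal is closed under multiplication
  have mulclosed : ∀ I : Submodule K A, (∀ (a x : A), x ∈ I → f x a ∈ I) →
      ∀ (t x : A), x ∈ I → t * x ∈ I := by
    intro I hI t x hx
    -- first, for u a generator and v ∈ G
    have inner : ∀ c a : A, ∀ v ∈ G, ∀ s : A, s * ((c * g a) * (v * x)) ∈ I := by
      intro c a v hv
      induction hv using Submodule.span_induction with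
      | mem z hz =>
        obtain ⟨d, b, rfl⟩ := hz
        intro s
        have heq : s * ((c * g a) * ((d * g b) * x)) =
            (s * (c * d)) * (g a * (g b * x)) := by ring
        rw [heq]
        exact memI I hI x hx a b (s * (c * d))
      | zero =>
        intro s
        have heq : s * ((c * g a) * ((0 : A) * x)) = 0 := by ring
        rw [heq]; exact I.zero_mem
      | add u v hu hv hu' hv' =>
        intro s
        have heq : s * ((c * g a) * ((u + v) * x)) =
            s * ((c * g a) * (u * x)) + s * ((c * g a) * (v * x)) := by ring
        rw [heq]; exact I.add_mem (hu' s) (hv' s)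
      | smul k u hu hu' =>
        intro s
        have heq : s * ((c * g a) * ((k • u) * x)) =
            k • (s * ((c * g a) * (u * x))) := by
          rw [smul_mul_assoc, mul_smul_comm, mul_smul_comm]
        rw [heq]; exact I.smul_mem k (hu' s)
    have outer : ∀ u ∈ G, ∀ s : A, s * (u * (1 * x)) ∈ I := by
      intro u hu
      induction hu using Submodule.span_induction with
      | mem z hz =>
        obtain ⟨c, a, rfl⟩ := hz
        intro s
        exact inner c a 1 h1G s
      | zero =>
        intro s
        have heq : s * ((0 : A) * (1 * x)) = 0 := by ring
        rw [heq]; exact I.zero_mem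
      | add u v hu hv hu' hv' =>
        intro s
        have heq : s * ((u + v) * (1 * x)) =
            s * (u * (1 * x)) + s * (v * (1 * x)) := by ring
        rw [heq]; exact I.add_mem (hu' s) (hv' s)
      | smul k u hu hu' =>
        intro s
        have heq : s * ((k • u) * (1 * x)) = k • (s * (u * (1 * x))) := by
          rw [smul_mul_assoc, mul_smul_comm]
        rw [heq]; exact I.smul_mem k (hu' s)
    have := outer 1 h1G t
    rwa [one_mul, one_mul] at this
  refine ⟨hnonab, fun I hI => ?_⟩
  exact hsimple I (fun a x hx => mulclosed I hI a x hx) hI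
end

section
/- Let (A, ·, [·,·]) be a transposed Poisson algebra over a field of characteristic zero. Then (A, ·, [·,·]) is simple if and only if the Lie algebra (A, [·,·]) is simple. -/
private lemma tp_aux_cancel {K A : Type*} [Field K] [AddCommGroup A] [Module K A]
    {c : K} (hc : c ≠ 0) {v : A} (h : c • v = 0) : v = 0 := by
  have h3 := congrArg (fun t => c⁻¹ • t) h
  simpa [inv_smul_smul₀ hc] using h3

private lemma tp_aux_pow {K A : Type*} [Field K] [CommRing A] [Algebra K A]
    (D : A → A) (hder : ∀ a b : A, D (a * b) = a * D b + b * D a) :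
    ∀ (n : ℕ) (x : A), D (x ^ (n + 1)) = ((n : K) + 1) • (x ^ n * D x) := by
  intro n
  induction n with
  | zero => intro x; rw [pow_one, pow_zero, one_mul, Nat.cast_zero, zero_add, one_smul]
  | succ n ih =>
    intro x
    have h1 : x ^ (n + 1 + 1) = x * x ^ (n + 1) := by ring
    rw [h1, hder, ih, mul_smul_comm,
      show x * (x ^ n * D x) = x ^ (n + 1) * D x from by ring]
    push_cast
    module

private lemma tp_aux_descent {K A : Type*} [Field K] [CharZero K] [CommRing A] [Algebra K A]
    (D : A → A) (hder : ∀ a b : A, D (a * b) = a * D b + b * D a)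
    (hD0 : D 0 = 0) (x : A) (k m : ℕ)
    (h : x ^ (k + 1) * D x ^ (m + 1) = 0) : x ^ k * D x ^ (m + 3) = 0 := by
  have h0 : D (x ^ (k + 1) * D x ^ (m + 1)) = 0 := by rw [h, hD0]
  rw [hder] at h0
  rw [tp_aux_pow (K := K) D hder m (D x), tp_aux_pow (K := K) D hder k x] at h0
  have h1 := congrArg (fun t => t * D x) h0
  simp only [add_mul, zero_mul] at h1
  rw [mul_smul_comm, mul_smul_comm, smul_mul_assoc, smul_mul_assoc] at h1
  rw [show x ^ (k + 1) * (D x ^ m * D (D x)) * D x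
      = (x ^ (k + 1) * D x ^ (m + 1)) * D (D x) from by ring] at h1
  rw [h, zero_mul, smul_zero, zero_add] at h1
  rw [show D x ^ (m + 1) * (x ^ k * D x) * D x = x ^ k * D x ^ (m + 3) from by ring] at h1
  exact tp_aux_cancel (K := K) (Nat.cast_add_one_ne_zero k) h1

private lemma tp_aux_nilchain {K A : Type*} [Field K] [CharZero K] [CommRing A] [Algebra K A]
    (D : A → A) (hder : ∀ a b : A, D (a * b) = a * D b + b * D a)
    (hD0 : D 0 = 0) :
    ∀ (k m : ℕ) (x : A), x ^ k * D x ^ (m + 1) = 0 → D x ^ (2 * k + m + 1) = 0 := by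
  intro k
  induction k with
  | zero =>
    intro m x h
    rw [pow_zero, one_mul] at h
    rw [show 2 * 0 + m + 1 = m + 1 from by omega]
    exact h
  | succ k ih =>
    intro m x h
    have h2 := tp_aux_descent (K := K) D hder hD0 x k m h
    have h3 := ih (m + 2) x (by rw [show m + 2 + 1 = m + 3 from by omega]; exact h2)
    rw [show 2 * (k + 1) + m + 1 = 2 * k + (m + 2) + 1 from by omega]
    exact h3

private lemma tp_aux_isnil {K A : Type*} [Field K] [CharZero K] [CommRing A] [Algebra K A]
    (D : A → A) (hder : ∀ a b : A, D (a * b) = a * D b + b * D a)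
    (hD0 : D 0 = 0) (x : A) (hx : IsNilpotent x) : IsNilpotent (D x) := by
  obtain ⟨n, hn⟩ := hx
  exact ⟨2 * n + 0 + 1, tp_aux_nilchain (K := K) D hder hD0 n 0 x (by rw [hn, zero_mul])⟩

theorem tp_simple_iff_lie_simple {K A : Type*} [Field K] [CharZero K]
    [CommRing A] [Algebra K A]
    (f : A → A → A)
    (hadd1 : ∀ a b c : A, f (a + b) c = f a c + f b c)
    (hadd2 : ∀ a b c : A, f a (b + c) = f a b + f a c)
    (hsmul1 : ∀ (k : K) (a b : A), f (k • a) b = k • f a b)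
    (hsmul2 : ∀ (k : K) (a b : A), f a (k • b) = k • f a b)
    (hskew : ∀ a b : A, f a b = - f b a)
    (hjac : ∀ a b c : A, f (f a b) c + f (f b c) a + f (f c a) b = 0)
    (hleib : ∀ h a b : A, 2 * (h * f a b) = f (h * a) b + f a (h * b)) :
    ((∃ a b : A, f a b ≠ 0) ∧
      (∀ I : Submodule K A,
        (∀ (a : A) (x : A), x ∈ I → a * x ∈ I) →
        (∀ (a : A) (x : A), x ∈ I → f x a ∈ I) → I = ⊥ ∨ I = ⊤)) ↔
    ((∃ a b : A, f a b ≠ 0) ∧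
      (∀ I : Submodule K A,
        (∀ (a : A) (x : A), x ∈ I → f x a ∈ I) → I = ⊥ ∨ I = ⊤)) := by
  constructor
  · rintro ⟨hne, hsimp⟩
    refine ⟨hne, ?_⟩
    intro I hLie
    by_cases hbot : I = ⊥
    · exact Or.inl hbot
    · right
      by_contra htop
      -- basic cancellation facts
      have htwoK : (2 : K) ≠ 0 := two_ne_zero
      have half : ∀ v w : A, v + v = w + w → v = w := by
        intro v w h
        have h2 : (2 : K) • v = (2 : K) • w := by rw [two_smul, two_smul]; exact h
        have h3 := congrArg (fun t => (2 : K)⁻¹ • t) h2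
        simpa [inv_smul_smul₀ htwoK] using h3
      have halfmem : ∀ v w : A, v + v = w → w ∈ I → v ∈ I := by
        intro v w h hw
        have h1 : v = (2 : K)⁻¹ • w := by
          rw [← h, ← two_smul K v, inv_smul_smul₀ htwoK]
        rw [h1]; exact I.smul_mem _ hw
      -- D := f 1 is a derivation and f a b = a * D b - b * D a
      have hder : ∀ a b : A, f 1 (a * b) = a * f 1 b + b * f 1 a := by
        intro a b
        have e1 := hleib a 1 b
        rw [mul_one] at e1
        have e2 := hleib b 1 a
        rw [mul_one] at e2
        rw [mul_comm b a] at e2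
        apply half
        linear_combination -(hskew a b) - e1 - e2
      have hf : ∀ a b : A, f a b = a * f 1 b - b * f 1 a := by
        intro a b
        have e1 := hleib a 1 b
        rw [mul_one] at e1
        linear_combination -e1 - hder a b
      have hDzero : f 1 (0 : A) = 0 := by simpa using hder 0 0
      have hD1 : f 1 (1 : A) = 0 := by
        have h := hder 1 1
        rw [mul_one, one_mul] at h
        exact left_eq_add.mp h
      have hf0 : ∀ b : A, f 0 b = 0 := by
        intro b
        have h := hadd1 0 0 b
        rw [add_zero] at h
        exact left_eq_add.mp h
      have hDI : ∀ x, x ∈ I → f 1 x ∈ I := by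
        intro x hx
        have h := hLie 1 x hx
        rw [hf, hD1, mul_zero, one_mul, zero_sub] at h
        exact neg_mem_iff.mp h
      -- the TP-ideal {v | v * A ⊆ I} is trivial
      have hNmain : ∀ v : A, (∀ b : A, v * b ∈ I) → v = 0 := by
        intro v hv
        let N : Submodule K A :=
          { carrier := {z : A | ∀ b : A, z * b ∈ I}
            add_mem' := fun hp hq b => by
              rw [add_mul]; exact I.add_mem (hp b) (hq b)
            zero_mem' := fun b => by rw [zero_mul]; exact I.zero_mem
            smul_mem' := fun k z hz b => by
              rw [smul_mul_assoc]; exact I.smul_mem k (hz b) }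
        have hmemN : ∀ z : A, z ∈ N ↔ ∀ b : A, z * b ∈ I := fun z => Iff.rfl
        have hmul : ∀ (a x : A), x ∈ N → a * x ∈ N := by
          intro a x hx
          rw [hmemN] at hx ⊢
          intro b
          have h1 : x * (a * b) ∈ I := hx (a * b)
          rwa [show x * (a * b) = a * x * b from by ring] at h1
        have hlie : ∀ (a x : A), x ∈ N → f x a ∈ N := by
          intro a x hx
          rw [hmemN] at hx ⊢
          have hDz : ∀ c, f 1 x * c ∈ I := by
            intro c
            have h1 : f 1 (x * c) ∈ I := hDI _ (hx c)
            have h2 : x * f 1 c ∈ I := hx (f 1 c)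
            have h3 := I.sub_mem h1 h2
            rwa [show f 1 (x * c) - x * f 1 c = f 1 x * c from by rw [hder]; ring] at h3
          intro b
          have h4 := I.sub_mem (hx (f 1 a * b)) (hDz (a * b))
          rwa [show x * (f 1 a * b) - f 1 x * (a * b) = f x a * b from by rw [hf x a]; ring] at h4
        rcases hsimp N hmul hlie with hB | hT
        · have hvN : v ∈ N := (hmemN v).mpr hv
          rw [hB] at hvN
          simpa using hvN
        · exfalso; apply htop
          rw [Submodule.eq_top_iff']
          intro z
          have h1 : (1 : A) ∈ N := by rw [hT]; trivial
          have h2 := (hmemN 1).mp h1 z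
          rwa [one_mul] at h2
      -- the TP-ideal of nilpotent elements is trivial
      have hNilmain : ∀ v : A, IsNilpotent v → v = 0 := by
        intro v hv
        let Nil : Submodule K A :=
          { carrier := {z : A | IsNilpotent z}
            add_mem' := fun hp hq => (Commute.all _ _).isNilpotent_add hp hq
            zero_mem' := ⟨1, by simp⟩
            smul_mem' := fun k z hz => by
              obtain ⟨n, hn⟩ := hz
              exact ⟨n, by rw [smul_pow, hn, smul_zero]⟩ }
        have hmemNil : ∀ z : A, z ∈ Nil ↔ IsNilpotent z := fun z => Iff.rfl
        have hmul : ∀ (a x : A), x ∈ Nil → a * x ∈ Nil := by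
          intro a x hx
          rw [hmemNil] at hx ⊢
          obtain ⟨n, hn⟩ := hx
          exact ⟨n, by rw [mul_pow, hn, mul_zero]⟩
        have hlie : ∀ (a x : A), x ∈ Nil → f x a ∈ Nil := by
          intro a x hx
          rw [hmemNil] at hx ⊢
          obtain ⟨n, hn⟩ := hx
          have h1 : IsNilpotent (x * f 1 a) := ⟨n, by rw [mul_pow, hn, zero_mul]⟩
          have h2 : IsNilpotent (f 1 x) := tp_aux_isnil (K := K) (f 1) hder hDzero x ⟨n, hn⟩
          have h3 : IsNilpotent (a * f 1 x) := by
            obtain ⟨m, hm⟩ := h2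
            exact ⟨m, by rw [mul_pow, hm, mul_zero]⟩
          have h4 := (Commute.all (x * f 1 a) (a * f 1 x)).isNilpotent_sub h1 h3
          rw [hf]; exact h4
        rcases hsimp Nil hmul hlie with hB | hT
        · have hvN : v ∈ Nil := (hmemNil v).mpr hv
          rw [hB] at hvN
          simpa using hvN
        · exfalso
          have h1 : (1 : A) ∈ Nil := by rw [hT]; trivial
          obtain ⟨n, hn⟩ := (hmemNil 1).mp h1
          rw [one_pow] at hn
          obtain ⟨a, b, hab⟩ := hne
          apply hab
          have ha : a = 0 := by rw [← mul_one a, hn, mul_zero]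
          rw [ha]; exact hf0 b
      -- the span of A * I is a TP-ideal; it must be ⊤, giving the key element r
      set S : Set A := {z : A | ∃ a y : A, y ∈ I ∧ z = a * y} with hS
      have hJmul : ∀ (c z : A), z ∈ Submodule.span K S → c * z ∈ Submodule.span K S := by
        intro c z hz
        induction hz using Submodule.span_induction with
        | mem w hw =>
          obtain ⟨a, y, hy, rfl⟩ := hw
          exact Submodule.subset_span ⟨c * a, y, hy, by ring⟩
        | zero => rw [mul_zero]; exact Submodule.zero_mem _
        | add u v hu hv ihu ihv => rw [mul_add]; exact Submodule.add_mem _ ihu ihv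
        | smul k u hu ihu => rw [mul_smul_comm]; exact Submodule.smul_mem _ k ihu
      have hJlie : ∀ (c z : A), z ∈ Submodule.span K S → f z c ∈ Submodule.span K S := by
        intro c z hz
        induction hz using Submodule.span_induction with
        | mem w hw =>
          obtain ⟨a, y, hy, rfl⟩ := hw
          have heq : f (a * y) c
              = (a * f 1 c) * y - ((c * a) * f 1 y + (c * f 1 a) * y) := by
            rw [hf, hder]; ring
          rw [heq]
          refine Submodule.sub_mem _ (Submodule.subset_span ⟨a * f 1 c, y, hy, rfl⟩)
            (Submodule.add_mem _ (Submodule.subset_span ⟨c * a, f 1 y, hDI y hy, rfl⟩)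
              (Submodule.subset_span ⟨c * f 1 a, y, hy, rfl⟩))
        | zero => rw [hf0]; exact Submodule.zero_mem _
        | add u v hu hv ihu ihv => rw [hadd1]; exact Submodule.add_mem _ ihu ihv
        | smul k u hu ihu => rw [hsmul1]; exact Submodule.smul_mem _ k ihu
      have hJkey : ∀ t : A, t ∈ Submodule.span K S →
          ∃ r : A, r ∈ I ∧ ∀ b : A, t * f 1 b + b * r ∈ I := by
        intro t ht
        induction ht using Submodule.span_induction with
        | mem w hw =>
          obtain ⟨a, y, hy, rfl⟩ := hw
          refine ⟨f y a, hLie a y hy, fun b => ?_⟩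
          have hkey : (a * y) * f 1 b + b * f y a = f y (a * b) := by
            rw [hf y (a * b), hf y a, hder]; ring
          rw [hkey]
          exact hLie (a * b) y hy
        | zero =>
          refine ⟨0, I.zero_mem, fun b => ?_⟩
          rw [zero_mul, mul_zero, add_zero]
          exact I.zero_mem
        | add u v hu hv ihu ihv =>
          obtain ⟨r1, hr1, h1⟩ := ihu
          obtain ⟨r2, hr2, h2⟩ := ihv
          refine ⟨r1 + r2, I.add_mem hr1 hr2, fun b => ?_⟩
          have heq : (u + v) * f 1 b + b * (r1 + r2)
              = (u * f 1 b + b * r1) + (v * f 1 b + b * r2) := by ring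
          rw [heq]
          exact I.add_mem (h1 b) (h2 b)
        | smul k u hu ihu =>
          obtain ⟨r, hr, h1⟩ := ihu
          refine ⟨k • r, I.smul_mem k hr, fun b => ?_⟩
          have heq : (k • u) * f 1 b + b * (k • r) = k • (u * f 1 b + b * r) := by
            rw [smul_mul_assoc, mul_smul_comm, smul_add]
          rw [heq]
          exact I.smul_mem k (h1 b)
      obtain ⟨r, hrI, hDb⟩ : ∃ r : A, r ∈ I ∧ ∀ b : A, f 1 b + b * r ∈ I := by
        rcases hsimp (Submodule.span K S) hJmul hJlie with hB | hT
        · exfalso; apply hbot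
          rw [eq_bot_iff]
          intro x hx
          have h1 : x ∈ Submodule.span K S :=
            Submodule.subset_span ⟨1, x, hx, (one_mul x).symm⟩
          rw [hB] at h1
          exact h1
        · have h1 : (1 : A) ∈ Submodule.span K S := by rw [hT]; trivial
          obtain ⟨r, hrI, hr⟩ := hJkey 1 h1
          refine ⟨r, hrI, fun b => ?_⟩
          have := hr b
          rwa [one_mul] at this
      -- chain of consequences: r = 0, so f 1 b ∈ I for all b
      have hs2 : ∀ x, x ∈ I → x * r ∈ I := by
        intro x hx
        have h1 := hDb x
        have h2 := hDI x hx
        have h3 := I.sub_mem h1 h2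
        rwa [show f 1 x + x * r - f 1 x = x * r from by ring] at h3
      have hs3 : ∀ b : A, r * f 1 b + b * (r * r) ∈ I := by
        intro b
        have h1 := hs2 _ (hDb b)
        rwa [show (f 1 b + b * r) * r = r * f 1 b + b * (r * r) from by ring] at h1
      have hs4 : ∀ b : A, b * f 1 r ∈ I := by
        intro b
        have h1 := hDb (b * r)
        rw [hder b r] at h1
        have h2 := I.sub_mem h1 (hs3 b)
        rwa [show b * f 1 r + r * f 1 b + b * r * r - (r * f 1 b + b * (r * r))
            = b * f 1 r from by ring] at h2
      have hDr0 : f 1 r = 0 := by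
        apply hNmain
        intro b
        have := hs4 b
        rwa [mul_comm] at this
      have hs6 : ∀ b : A, r * f 1 b ∈ I := by
        intro b
        have h := hLie b r hrI
        rwa [hf, hDr0, mul_zero, sub_zero] at h
      have hrr : r * r = 0 := by
        apply hNmain
        intro b
        have h3 := I.sub_mem (hs3 b) (hs6 b)
        rwa [show r * f 1 b + b * (r * r) - r * f 1 b = r * r * b from by ring] at h3
      have hr0 : r = 0 := hNilmain r ⟨2, by rw [pow_two, hrr]⟩
      have hDbI : ∀ b : A, f 1 b ∈ I := by
        intro b
        have := hDb b
        rwa [hr0, mul_zero, add_zero] at this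
      -- A * [I, I] ⊆ I, hence [I, I] = 0
      have hbf : ∀ x, x ∈ I → ∀ y, y ∈ I → ∀ b : A, b * f x y ∈ I := by
        intro x hx y hy b
        have hw : f x (y * b) - f y (x * b) ∈ I :=
          I.sub_mem (hLie (y * b) x hx) (hLie (x * b) y hy)
        have heq : (b * f x y) + (b * f x y) = f x (y * b) - f y (x * b) := by
          rw [hf x y, hf x (y * b), hf y (x * b), hder y b, hder x b]; ring
        exact halfmem _ _ heq hw
      have habel : ∀ x, x ∈ I → ∀ y, y ∈ I → f x y = 0 := by
        intro x hx y hy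
        apply hNmain
        intro b
        have := hbf x hx y hy b
        rwa [mul_comm] at this
      -- conclude (f 1 a)^3 = 0 for all a, hence f 1 = 0, contradiction
      have hcube : ∀ a : A, (f 1 a) ^ 3 = 0 := by
        intro a
        have e := habel (f 1 a) (hDbI a) (f 1 (a * a)) (hDbI (a * a))
        rw [hf] at e
        rw [hder a a] at e
        rw [hadd2 1 (a * f 1 a) (a * f 1 a)] at e
        rw [hder a (f 1 a)] at e
        have e3 : (f 1 a) ^ 3 + (f 1 a) ^ 3 = 0 + 0 := by
          rw [add_zero]; linear_combination e
        exact half _ _ e3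
      have hDall : ∀ a : A, f 1 a = 0 := fun a => hNilmain _ ⟨3, hcube a⟩
      obtain ⟨a, b, hab⟩ := hne
      apply hab
      rw [hf a b, hDall a, hDall b, mul_zero, mul_zero, sub_zero]
  · rintro ⟨hne, hsimp⟩
    exact ⟨hne, fun I _ hlie => hsimp I hlie⟩
end

section
/- Let A be a commutative associative algebra over a field of characteristic zero with a derivation D, and let (A, ·, [·,·]) be a transposed Poisson algebra such that D is also a derivation of the Lie bracket. Define μ(a₁,a₂,a₃) = D(a₁)[a₂,a₃] − D(a₂)[a₁,a₃] + D(a₃)[a₁,a₂]. Then μ is trilinear, totally skew-symmetric, and satisfies the transposed Leibniz rule 3h·μ(a₁,a₂,a₃) = μ(ha₁,a₂,a₃) + μ(a₁,ha₂,a₃) + μ(a₁,a₂,ha₃). -/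
theorem mu_skew_and_transposed_leibniz {K A : Type*} [Field K] [CharZero K]
    [CommRing A] [Algebra K A]
    (f : A → A → A)
    (hadd1 : ∀ a b c : A, f (a + b) c = f a c + f b c)
    (hadd2 : ∀ a b c : A, f a (b + c) = f a b + f a c)
    (hsmul1 : ∀ (k : K) (a b : A), f (k • a) b = k • f a b)
    (hsmul2 : ∀ (k : K) (a b : A), f a (k • b) = k • f a b)
    (hskew : ∀ a b : A, f a b = - f b a)
    (hjac : ∀ a b c : A, f (f a b) c + f (f b c) a + f (f c a) b = 0)
    (hleib : ∀ h a b : A, 2 * (h * f a b) = f (h * a) b + f a (h * b))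
    (D : A →ₗ[K] A)
    (hDmul : ∀ a b : A, D (a * b) = D a * b + a * D b)
    (hDbr : ∀ a b : A, D (f a b) = f (D a) b + f a (D b))
    (μ : A → A → A → A)
    (hμ : ∀ a1 a2 a3 : A,
      μ a1 a2 a3 = D a1 * f a2 a3 - D a2 * f a1 a3 + D a3 * f a1 a2) :
    (∀ a b c d : A, μ (a + b) c d = μ a c d + μ b c d) ∧
    (∀ a b c d : A, μ a (b + c) d = μ a b d + μ a c d) ∧
    (∀ a b c d : A, μ a b (c + d) = μ a b c + μ a b d) ∧
    (∀ (k : K) (a b c : A), μ (k • a) b c = k • μ a b c) ∧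
    (∀ (k : K) (a b c : A), μ a (k • b) c = k • μ a b c) ∧
    (∀ (k : K) (a b c : A), μ a b (k • c) = k • μ a b c) ∧
    (∀ a b c : A, μ a b c = - μ b a c) ∧
    (∀ a b c : A, μ a b c = - μ a c b) ∧
    (∀ h a1 a2 a3 : A, 3 * (h * μ a1 a2 a3) =
      μ (h * a1) a2 a3 + μ a1 (h * a2) a3 + μ a1 a2 (h * a3)) := by

  have cyc : ∀ a b c : A, a * f b c - b * f a c + c * f a b = 0 := by
    intro a b c
    have e1 : f (a*b) c = f (b*a) c := by rw [mul_comm]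
    have e2 : f b (a*c) = f b (c*a) := by rw [mul_comm]
    have e3 : f a (b*c) = f a (c*b) := by rw [mul_comm]
    have h2 : (2:A) * (a * f b c - b * f a c + c * f a b) = 0 := by
      linear_combination (hleib a b c) - (hleib b a c) + (hleib c a b) + e1 + e2 - e3 +
        hskew (c*a) b
    have h2' : (2:K) • (a * f b c - b * f a c + c * f a b) = 0 := by
      rw [two_smul, ← two_mul]; exact h2
    exact (smul_eq_zero.mp h2').resolve_left two_ne_zero
  refine ⟨?_, ?_, ?_, ?_, ?_, ?_, ?_, ?_, ?_⟩
  · intro a b c d; simp only [hμ, map_add, hadd1, hadd2]; ring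
  · intro a b c d; simp only [hμ, map_add, hadd1, hadd2]; ring
  · intro a b c d; simp only [hμ, map_add, hadd1, hadd2]; ring
  · intro k a b c
    simp only [hμ, map_smul, hsmul1, hsmul2, smul_sub, smul_add, mul_smul_comm, smul_mul_assoc]
  · intro k a b c
    simp only [hμ, map_smul, hsmul1, hsmul2, smul_sub, smul_add, mul_smul_comm, smul_mul_assoc]
  · intro k a b c
    simp only [hμ, map_smul, hsmul1, hsmul2, smul_sub, smul_add, mul_smul_comm, smul_mul_assoc]
  · intro a b c; rw [hμ, hμ, hskew a b]; ring
  · intro a b c; rw [hμ, hμ, hskew b c]; ring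
  · intro h a1 a2 a3
    simp only [hμ]
    linear_combination (-(f a2 a3)) * hDmul h a1 + (f a1 a3) * hDmul h a2 -
      (f a1 a2) * hDmul h a3 + (D a1) * hleib h a2 a3 - (D a2) * hleib h a1 a3 +
      (D a3) * hleib h a1 a2 - (D h) * cyc a1 a2 a3
end
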